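/- arXiv:2602.16248 — 4 statements merged into one kernel-verified Lean document; each statement's English description precedes it below -/
import Mathlib

section
/- If two b-linked geodesics c_{x₁}, c_{x₂} of positive discriminants D₁, D₂ in the hyperbolic plane do not intersect (i.e., b² ≥ D₁D₂ with b > 0), then their hyperbolic distance d satisfies cosh(d) = b/√(D₁D₂). -/
noncomputable section

/-- the bilinear form of signature `(2,1)` on `ℝ³` (Minkowski model), with `Q(x) = B(x,x)`. -/
def mB (x y : Fin 3 → ℝ) : ℝ := x 0 * y 0 + x 1 * y 1 - x 2 * y 2

/-- inverse hyperbolic cosine -/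
def arcosh (x : ℝ) : ℝ := Real.log (x + Real.sqrt (x ^ 2 - 1))

/-!
For `u ∈ c_{x₁}` and `w ∈ c_{x₂}` the Gram determinants of `(x₁, x₂, u)` and `(x₂, u, w)` are
`≤ 0`; together they give `D₁D₂ B(u, w)² ≥ b²`, i.e. `cosh d(u, w) ≥ b / √(D₁D₂)`.
Conversely, the foot `w` of the perpendicular from `u` to `c_{x₂}` has
`cosh² d(u, w) = 1 + B(x₂, u)² / D₂`, and along a ray of `c_{x₁}` heading for the point nearest
to `c_{x₂}` (an ideal point when `b² = D₁D₂`) `B(x₂, u)²` tends to `(b² - D₁D₂) / D₁`, the equality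
case of the first Gram inequality.
-/

open Filter Topology

section Minkowski

variable (x y z : Fin 3 → ℝ) (a : ℝ)

lemma mB_comm : mB x y = mB y x := by simp only [mB]; ring

@[simp] lemma mB_add_right : mB x (y + z) = mB x y + mB x z := by
  simp only [mB, Pi.add_apply]; ring

@[simp] lemma mB_sub_right : mB x (y - z) = mB x y - mB x z := by
  simp only [mB, Pi.sub_apply]; ring

@[simp] lemma mB_smul_right : mB x (a • y) = a * mB x y := by
  simp only [mB, Pi.smul_apply, smul_eq_mul]; ring

@[simp] lemma mB_add_left : mB (x + y) z = mB x z + mB y z := by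
  simp only [mB, Pi.add_apply]; ring

@[simp] lemma mB_sub_left : mB (x - y) z = mB x z - mB y z := by
  simp only [mB, Pi.sub_apply]; ring

@[simp] lemma mB_smul_left : mB (a • x) y = a * mB x y := by
  simp only [mB, Pi.smul_apply, smul_eq_mul]; ring

/-- The Gram determinant of three vectors is `-det(x, y, z)²`. -/
lemma gram_det_nonpos :
    mB x x * mB y y * mB z z + 2 * mB x y * mB y z * mB x z
      - mB x x * mB y z ^ 2 - mB y y * mB x z ^ 2 - mB z z * mB x y ^ 2 ≤ 0 := by
  have := sq_nonneg (x 0 * (y 1 * z 2 - y 2 * z 1) - x 1 * (y 0 * z 2 - y 2 * z 0)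
    + x 2 * (y 0 * z 1 - y 1 * z 0))
  simp only [mB]
  linear_combination this

end Minkowski

lemma mB_neg_iff {u v : Fin 3 → ℝ} (hu : mB u u < 0) (hv : mB v v < 0) :
    mB u v < 0 ↔ 0 < u 2 * v 2 := by
  simp only [mB] at *
  have hcs : (u 0 * v 0 + u 1 * v 1) ^ 2 < (u 2 * v 2) ^ 2 := by
    nlinarith [sq_nonneg (u 0 * v 1 - u 1 * v 0), sq_nonneg (u 0), sq_nonneg (u 1),
      sq_nonneg (v 0), sq_nonneg (v 1)]
  have hst := sq_lt_sq.mp hcs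
  rcases le_or_gt (u 2 * v 2) 0 with ht | ht
  · rw [abs_of_nonpos ht] at hst
    constructor <;> intro h <;> linarith [neg_abs_le (u 0 * v 0 + u 1 * v 1)]
  · rw [abs_of_pos ht] at hst
    exact iff_of_true (by linarith [le_abs_self (u 0 * v 0 + u 1 * v 1)]) ht

def unitize (v : Fin 3 → ℝ) : Fin 3 → ℝ := (√(-mB v v))⁻¹ • v

section unitize

variable {v : Fin 3 → ℝ}

lemma mB_unitize_self (hv : mB v v < 0) : mB (unitize v) (unitize v) = -1 := by
  have h := Real.sq_sqrt (neg_nonneg.mpr hv.le)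
  have hs : √(-mB v v) ≠ 0 := (Real.sqrt_pos.mpr (neg_pos.mpr hv)).ne'
  simp only [unitize, mB_smul_left, mB_smul_right]
  field_simp
  linarith

lemma unitize_two_pos (hv : mB v v < 0) (hv2 : 0 < v 2) : 0 < unitize v 2 := by
  have := Real.sqrt_pos.mpr (neg_pos.mpr hv)
  simp only [unitize, Pi.smul_apply, smul_eq_mul]
  positivity

lemma mB_unitize_right (x v : Fin 3 → ℝ) : mB x (unitize v) = mB x v / √(-mB v v) := by
  simp only [unitize, mB_smul_right]; ring

end unitize

lemma exists_mem_geodesic {x : Fin 3 → ℝ} (hx : 0 < mB x x) :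
    ∃ u, mB u u = -1 ∧ 0 < u 2 ∧ mB x u = 0 := by
  set v : Fin 3 → ℝ := ![x 0 * x 2, x 1 * x 2, x 0 ^ 2 + x 1 ^ 2]
  have hv : mB v v = -(mB x x * (x 0 ^ 2 + x 1 ^ 2)) := by
    simp only [v, mB, Matrix.cons_val]
    ring
  have hv2 : 0 < v 2 := by
    simp only [v, Matrix.cons_val]; simp only [mB] at hx; nlinarith [sq_nonneg (x 2)]
  have hvv : mB v v < 0 := by rw [hv]; exact neg_neg_of_pos (mul_pos hx hv2)
  refine ⟨unitize v, mB_unitize_self hvv, unitize_two_pos hvv hv2, ?_⟩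
  rw [mB_unitize_right]
  simp only [v, mB, Matrix.cons_val]
  ring

/-- `w` is the foot of the perpendicular from `u` to the geodesic `x^⊥`. -/
lemma exists_foot {x u : Fin 3 → ℝ} (hx : 0 < mB x x) (hu : mB u u = -1) (hu2 : 0 < u 2) :
    ∃ w, mB w w = -1 ∧ 0 < w 2 ∧ mB x w = 0 ∧
      -mB u w = √(1 + mB x u ^ 2 / mB x x) := by
  set v := u - (mB x u / mB x x) • x
  have hvv : mB v v = -(1 + mB x u ^ 2 / mB x x) := by
    simp only [v, mB_sub_left, mB_sub_right, mB_smul_left, mB_smul_right, hu, mB_comm u x]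
    field_simp
    ring
  have hvv_neg : mB v v < 0 := by
    rw [hvv]; exact neg_neg_of_pos (add_pos_of_pos_of_nonneg one_pos (by positivity))
  have huv : mB u v = mB v v := by
    rw [hvv]; simp only [v, mB_sub_right, mB_smul_right, hu, mB_comm u x]; field_simp; ring
  have hv2 : 0 < v 2 := by
    have := (mB_neg_iff (hu ▸ neg_one_lt_zero) hvv_neg).mp (huv ▸ hvv_neg)
    exact pos_of_mul_pos_right this hu2.le
  refine ⟨unitize v, mB_unitize_self hvv_neg, unitize_two_pos hvv_neg hv2, ?_, ?_⟩
  · rw [mB_unitize_right]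
    simp only [v, mB_sub_right, mB_smul_right]
    field_simp
    ring
  · rw [mB_unitize_right, huv, hvv, neg_neg, neg_div, neg_neg, Real.div_sqrt]

lemma sub_le_mul_mB_sq {x₁ x₂ u : Fin 3 → ℝ} (hu : mB u u = -1) (hx₁u : mB x₁ u = 0) :
    mB x₁ x₂ ^ 2 - mB x₁ x₁ * mB x₂ x₂ ≤ mB x₁ x₁ * mB x₂ u ^ 2 := by
  have := gram_det_nonpos x₁ x₂ u
  rw [hu, hx₁u] at this
  linear_combination this

lemma add_mB_sq_le {x u w : Fin 3 → ℝ} (hu : mB u u = -1) (hw : mB w w = -1)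
    (hxw : mB x w = 0) : mB x x + mB x u ^ 2 ≤ mB x x * mB u w ^ 2 := by
  have := gram_det_nonpos x u w
  rw [hu, hw, hxw] at this
  linear_combination this

lemma div_sqrt_le_neg_mB {x₁ x₂ u w : Fin 3 → ℝ} (hx₁ : 0 < mB x₁ x₁)
    (hu : mB u u = -1) (hu2 : 0 < u 2) (hx₁u : mB x₁ u = 0)
    (hw : mB w w = -1) (hw2 : 0 < w 2) (hx₂w : mB x₂ w = 0) :
    mB x₁ x₂ / √(mB x₁ x₁ * mB x₂ x₂) ≤ -mB u w := by
  have huw : mB u w < 0 :=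
    (mB_neg_iff (by linarith) (by linarith)).mpr (mul_pos hu2 hw2)
  have key : mB x₁ x₂ ^ 2 ≤ mB x₁ x₁ * mB x₂ x₂ * mB u w ^ 2 := by
    have := mul_le_mul_of_nonneg_left (add_mB_sq_le hu hw hx₂w) hx₁.le
    linarith [sub_le_mul_mB_sq (x₂ := x₂) hu hx₁u]
  rcases (Real.sqrt_nonneg (mB x₁ x₁ * mB x₂ x₂)).eq_or_lt with h0 | hpos
  · rw [← h0, div_zero]; linarith
  rw [div_le_iff₀ hpos]
  calc mB x₁ x₂ ≤ |mB x₁ x₂| := le_abs_self _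
    _ ≤ √(mB x₁ x₁ * mB x₂ x₂ * mB u w ^ 2) := Real.abs_le_sqrt key
    _ = -mB u w * √(mB x₁ x₁ * mB x₂ x₂) := by
      rw [Real.sqrt_mul' _ (sq_nonneg _), Real.sqrt_sq_eq_abs, abs_of_neg huw, mul_comm]

def crossDisc (x₁ x₂ : Fin 3 → ℝ) : ℝ := mB x₁ x₂ ^ 2 - mB x₁ x₁ * mB x₂ x₂

/-- `q = ±(B(x₁,x₂) x₁ - Q(x₁) x₂)` with the sign making `B(u₀, q) ≤ 0`: normalized, the point
of `x₁^⊥` nearest to `x₂^⊥`, or their common ideal endpoint when `crossDisc x₁ x₂ = 0`. -/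
lemma exists_dir_nearest_point (x₂ : Fin 3 → ℝ) {x₁ u₀ : Fin 3 → ℝ}
    (hx₁u₀ : mB x₁ u₀ = 0) :
    ∃ q, mB x₁ q = 0 ∧ mB q q = -(mB x₁ x₁ * crossDisc x₁ x₂) ∧
      mB u₀ q = -(mB x₁ x₁ * |mB x₂ u₀|) ∧
      mB x₂ u₀ * mB x₂ q = |mB x₂ u₀| * crossDisc x₁ x₂ ∧
      mB x₂ q ^ 2 = crossDisc x₁ x₂ ^ 2 := by
  obtain ⟨σ, hσ, hσc₀⟩ : ∃ σ : ℝ, σ ^ 2 = 1 ∧ σ * mB x₂ u₀ = |mB x₂ u₀| := by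
    rcases le_total 0 (mB x₂ u₀) with h | h
    · exact ⟨1, by norm_num, by rw [abs_of_nonneg h, one_mul]⟩
    · exact ⟨-1, by norm_num, by rw [abs_of_nonpos h, neg_one_mul]⟩
  have hx₂q : mB x₂ (σ • (mB x₁ x₂ • x₁ - mB x₁ x₁ • x₂)) = σ * crossDisc x₁ x₂ := by
    simp only [crossDisc, mB_smul_right, mB_sub_right, mB_comm x₂ x₁]; ring
  refine ⟨σ • (mB x₁ x₂ • x₁ - mB x₁ x₁ • x₂), ?_, ?_, ?_, ?_, ?_⟩
  · simp only [mB_smul_right, mB_sub_right]; ring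
  · simp only [crossDisc, mB_smul_left, mB_smul_right, mB_sub_left, mB_sub_right,
      mB_comm x₂ x₁]
    linear_combination -(mB x₁ x₁ * (mB x₁ x₂ ^ 2 - mB x₁ x₁ * mB x₂ x₂)) * hσ
  · rw [mB_comm, ← hσc₀]
    simp only [mB_smul_left, mB_sub_left, hx₁u₀]
    ring
  · rw [hx₂q, ← hσc₀]; ring
  · rw [hx₂q, mul_pow, hσ, one_mul]

lemma exists_seq_mul_mB_sq_le {x₁ x₂ : Fin 3 → ℝ} (hx₁ : 0 < mB x₁ x₁)
    (hsep : 0 ≤ crossDisc x₁ x₂) :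
    ∃ u : ℕ → Fin 3 → ℝ, (∀ n, mB (u n) (u n) = -1 ∧ 0 < u n 2 ∧ mB x₁ (u n) = 0) ∧
      ∃ C, ∀ n : ℕ, 1 ≤ n → mB x₁ x₁ * mB x₂ (u n) ^ 2 ≤ crossDisc x₁ x₂ + C / n := by
  obtain ⟨u₀, hu₀, hu₀2, hx₁u₀⟩ := exists_mem_geodesic hx₁
  obtain ⟨q, hx₁q, hqq, hu₀q, hc₀q, hx₂q⟩ := exists_dir_nearest_point x₂ hx₁u₀
  set D := mB x₁ x₁
  set E := crossDisc x₁ x₂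
  set c₀ := mB x₂ u₀
  set N : ℕ → ℝ := fun n => 1 + 2 * n * D * |c₀| + n ^ 2 * D * E
  have hN : ∀ n, 1 ≤ N n := fun n => by
    have : 0 ≤ 2 * n * D * |c₀| + n ^ 2 * D * E := by positivity
    simp only [N]; linarith
  set v : ℕ → Fin 3 → ℝ := fun n => u₀ + (n : ℝ) • q
  have hvv : ∀ n, mB (v n) (v n) = -N n := fun n => by
    simp only [v, N, mB_add_left, mB_add_right, mB_smul_left, mB_smul_right, mB_comm q u₀,
      hu₀, hu₀q, hqq]
    ring
  have hv : ∀ n, mB (v n) (v n) < 0 ∧ 0 < v n 2 := fun n => by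
    have hvv_neg : mB (v n) (v n) < 0 := by rw [hvv]; linarith [hN n]
    refine ⟨hvv_neg, pos_of_mul_pos_right ((mB_neg_iff (by linarith) hvv_neg).mp ?_) hu₀2.le⟩
    have : 0 ≤ (n : ℝ) * (D * |c₀|) := by positivity
    simp only [v, mB_add_right, mB_smul_right, hu₀, hu₀q]
    linarith
  refine ⟨fun n => unitize (v n), fun n => ⟨mB_unitize_self (hv n).1,
    unitize_two_pos (hv n).1 (hv n).2, ?_⟩, |c₀| / 2, fun n hn => ?_⟩
  · rw [mB_unitize_right]
    simp only [v, mB_add_right, mB_smul_right, hx₁u₀, hx₁q, mul_zero, add_zero, zero_div]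
  have hn : (0 : ℝ) < n := by exact_mod_cast hn
  have hNpos : 0 < N n := by linarith [hN n]
  have hf : D * mB x₂ (unitize (v n)) ^ 2 = E + (D * c₀ ^ 2 - E) / N n := by
    rw [mB_unitize_right, hvv, neg_neg, div_pow, Real.sq_sqrt hNpos.le]
    field_simp
    simp only [v, N, mB_add_right, mB_smul_right]
    linear_combination (2 * n * D) * hc₀q + (n ^ 2 * D) * hx₂q
  have hK : (D * c₀ ^ 2 - E) * n ≤ |c₀| / 2 * N n := by
    have : 0 ≤ |c₀| * (1 + n ^ 2 * D * E) := by positivity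
    simp only [N]; rw [← sq_abs c₀]; nlinarith
  rw [hf, add_le_add_iff_left, div_le_div_iff₀ hNpos hn]
  exact hK

lemma exists_seq_tendsto_mB_sq {x₁ x₂ : Fin 3 → ℝ} (hx₁ : 0 < mB x₁ x₁)
    (hsep : 0 ≤ crossDisc x₁ x₂) :
    ∃ u : ℕ → Fin 3 → ℝ, (∀ n, mB (u n) (u n) = -1 ∧ 0 < u n 2 ∧ mB x₁ (u n) = 0) ∧
      Tendsto (fun n => mB x₂ (u n) ^ 2) atTop (𝓝 (crossDisc x₁ x₂ / mB x₁ x₁)) := by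
  obtain ⟨u, hu, C, hC⟩ := exists_seq_mul_mB_sq_le (x₂ := x₂) hx₁ hsep
  have hupper : Tendsto (fun n : ℕ => (crossDisc x₁ x₂ + C / n) / mB x₁ x₁) atTop
      (𝓝 (crossDisc x₁ x₂ / mB x₁ x₁)) := by
    simpa using (tendsto_const_nhds.add (tendsto_const_div_atTop_nhds_zero_nat C)).div_const _
  refine ⟨u, hu, tendsto_of_tendsto_of_tendsto_of_le_of_le' tendsto_const_nhds hupper
    (Eventually.of_forall fun n => ?_) ((eventually_ge_atTop 1).mono fun n hn => ?_)⟩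
  · exact (div_le_iff₀' hx₁).mpr (sub_le_mul_mB_sq (hu n).1 (hu n).2.2)
  · exact (le_div_iff₀' hx₁).mpr (hC n hn)

lemma arcosh_le_arcosh {a b : ℝ} (ha : 1 ≤ a) (hab : a ≤ b) : arcosh a ≤ arcosh b := by
  unfold arcosh
  apply Real.log_le_log (by positivity)
  gcongr

lemma continuousAt_arcosh {x : ℝ} (hx : 1 ≤ x) : ContinuousAt arcosh x := by
  unfold arcosh
  exact ContinuousAt.log (by fun_prop) (by positivity)

lemma div_sqrt_mul_eq_sqrt {b D₁ D₂ : ℝ} (hb : 0 ≤ b) (hD₁ : D₁ ≠ 0) (hD₂ : D₂ ≠ 0) :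
    b / √(D₁ * D₂) = √(1 + (b ^ 2 - D₁ * D₂) / D₁ / D₂) := by
  rw [show 1 + (b ^ 2 - D₁ * D₂) / D₁ / D₂ = b ^ 2 / (D₁ * D₂) by field_simp; ring,
    Real.sqrt_div (sq_nonneg b), Real.sqrt_sq hb]

/-- If two `b`-linked geodesics `c_{x₁}, c_{x₂}` of positive discriminants `D₁, D₂` do not
intersect (`b² ≥ D₁D₂`, `b > 0`), then their hyperbolic distance `d` (the infimum of the
hyperbolic distances `d(u,w) = arcosh(-B(u,w))` between points `u ∈ c_{x₁}`, `w ∈ c_{x₂}` on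
the hyperboloid sheet) satisfies `cosh d = b/√(D₁D₂)`. -/
theorem stmt7 (x₁ x₂ : Fin 3 → ℝ) (D₁ D₂ b : ℝ)
    (h1 : mB x₁ x₁ = D₁) (h2 : mB x₂ x₂ = D₂) (hD1 : 0 < D₁) (hD2 : 0 < D₂)
    (hb : mB x₁ x₂ = b) (hbpos : 0 < b) (hsep : D₁ * D₂ ≤ b ^ 2) :
    IsGLB {r : ℝ | ∃ u w : Fin 3 → ℝ,
        mB u u = -1 ∧ 0 < u 2 ∧ mB x₁ u = 0 ∧
        mB w w = -1 ∧ 0 < w 2 ∧ mB x₂ w = 0 ∧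
        r = arcosh (-(mB u w))}
      (arcosh (b / Real.sqrt (D₁ * D₂))) := by
  subst h1 h2 hb
  have hc : 1 ≤ mB x₁ x₂ / √(mB x₁ x₁ * mB x₂ x₂) := by
    rw [one_le_div (by positivity), ← Real.sqrt_sq hbpos.le]
    exact Real.sqrt_le_sqrt hsep
  refine isGLB_of_mem_closure ?_ ?_
  · rintro r ⟨u, w, hu, hu2, hx₁u, hw, hw2, hx₂w, rfl⟩
    exact arcosh_le_arcosh hc (div_sqrt_le_neg_mB hD1 hu hu2 hx₁u hw hw2 hx₂w)
  obtain ⟨u, hu, hlim⟩ := exists_seq_tendsto_mB_sq hD1 (sub_nonneg.mpr hsep)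
  choose w hw hw2 hx₂w hdist using fun n => exists_foot hD2 (hu n).1 (hu n).2.1
  rw [div_sqrt_mul_eq_sqrt hbpos.le hD1.ne' hD2.ne'] at hc ⊢
  refine mem_closure_of_tendsto ((continuousAt_arcosh hc).tendsto.comp
    ((hlim.div_const _).const_add 1).sqrt) (Eventually.of_forall fun n =>
      ⟨u n, w n, (hu n).1, (hu n).2.1, (hu n).2.2, hw n, hw2 n, hx₂w n, ?_⟩)
  simp only [Function.comp, hdist]
end
end

section
/- With L as above, there is a bijection between primitive vectors x ∈ L/{±1} of length Q(x) = D > 0 and optimal embeddings φ: 𝒪_D → 𝒪_M of the real quadratic order of discriminant D, up to Galois conjugation: from x one takes φ(𝒪_D) = ℤ⟨1, (1+x)/2⟩ if x ∉ 2L_M and ℤ⟨1, x/2⟩ if x ∈ 2L_M; from φ one takes x = ±φ(√D). -/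
noncomputable section

open Quaternion

/-- An order in the quaternion algebra `B = (a,b)_ℚ`: a `ℤ`-subalgebra which is finitely
generated as a `ℤ`-module and spans `B` over `ℚ`. -/
def IsOrder (a b : ℚ) (O : Subalgebra ℤ ℍ[ℚ, a, b]) : Prop :=
  (Subalgebra.toSubmodule O).FG ∧ ∀ x : ℍ[ℚ, a, b], ∃ n : ℤ, n ≠ 0 ∧ n • x ∈ O

/-- A maximal order. -/
def IsMaximalOrder (a b : ℚ) (O : Subalgebra ℤ ℍ[ℚ, a, b]) : Prop :=
  IsOrder a b O ∧ ∀ O' : Subalgebra ℤ ℍ[ℚ, a, b], IsOrder a b O' → O ≤ O' → O' = O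

/-- An Eichler order: the intersection of two maximal orders. -/
def IsEichlerOrder (a b : ℚ) (O : Subalgebra ℤ ℍ[ℚ, a, b]) : Prop :=
  ∃ O₁ O₂ : Subalgebra ℤ ℍ[ℚ, a, b],
    IsMaximalOrder a b O₁ ∧ IsMaximalOrder a b O₂ ∧ O = O₁ ⊓ O₂

/-- `Q(x) = -N(x) = x²` on trace-zero elements, where `N(x) = x·x̄` is the reduced norm. -/
def Qq (a b : ℚ) (x : ℍ[ℚ, a, b]) : ℚ := -((x * star x).re)

/-- `L_𝔐 = 𝒪_𝔐 ∩ V`, the lattice of trace-zero elements of the order `O`. -/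
def LMset (a b : ℚ) (O : Subalgebra ℤ ℍ[ℚ, a, b]) : Set ℍ[ℚ, a, b] :=
  {x | x.re = 0 ∧ x ∈ O}

/-- the sublattice `L := 2L_𝔐 ∪ {λ ∈ L_𝔐 : (1+λ)/2 ∈ 𝒪_𝔐}`. -/
def Lset (a b : ℚ) (O : Subalgebra ℤ ℍ[ℚ, a, b]) : Set ℍ[ℚ, a, b] :=
  {x | (∃ y ∈ LMset a b O, x = 2 • y) ∨
    (x ∈ LMset a b O ∧ (1 / 2 : ℚ) • (1 + x) ∈ O)}

/-- `x` is a primitive vector of the lattice (set) `A`: it lies in `A` and is not a proper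
integer multiple of a vector of `A`. -/
def IsPrimitiveIn (a b : ℚ) (A : Set ℍ[ℚ, a, b]) (x : ℍ[ℚ, a, b]) : Prop :=
  x ∈ A ∧ ∀ n : ℤ, ∀ y ∈ A, x = n • y → IsUnit n

/-- `S` is the image of an optimal embedding into `O` of the (real) quadratic order of
discriminant `D`: it is generated as a `ℤ`-module by `1` and an element `w` with
`tr(w)² - 4N(w) = D`, it is contained in `O`, and it equals the intersection of `O` with the
rational quadratic subalgebra `ℚ·1 + ℚ·w` (optimality: it cannot be extended to a strictly
larger order of that quadratic field inside `O`). -/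
def IsOptimalEmbImage (a b : ℚ) (O S : Subalgebra ℤ ℍ[ℚ, a, b]) (D : ℤ) : Prop :=
  ∃ w : ℍ[ℚ, a, b],
    ((S : Set ℍ[ℚ, a, b]) = {z | ∃ m n : ℤ, z = m • (1 : ℍ[ℚ, a, b]) + n • w}) ∧
    (2 * w.re) ^ 2 - 4 * ((w * star w).re) = (D : ℚ) ∧
    S ≤ O ∧
    (∀ z ∈ O, (∃ p q : ℚ, z = p • (1 : ℍ[ℚ, a, b]) + q • w) → z ∈ S)

/-!
The map `z ↦ z - z̄ = 2 Im z` sends `𝒪_𝔐` onto `L`: the trace of `z ∈ 𝒪_𝔐` is an integer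
(Gauss's lemma applied to the reduced characteristic polynomial), so `z` differs by an integer
from `Im z` or from `(1 + 2 Im z)/2`. A generator `w` of an optimal embedding therefore gives the
vector `x = w - w̄ ∈ L` with `Q(x) = tr(w)² - 4N(w) = D`, and `x` gives back the generator `x/2`
or `(1 + x)/2`. Optimality of `ℤ⟨1, w⟩` is primitivity of `x`: an element `p + q w` of `𝒪_𝔐`
with `p, q ∈ ℚ` has `q x ∈ L`, which forces `q ∈ ℤ` when `x` is primitive. Two generators with
the same `w - w̄` differ by an integer, so the embedding only depends on `±x`.
-/

open Polynomial

lemma Polynomial.mem_lifts_of_isIntegral {R K A : Type*} [CommRing R] [IsDomain R]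
    [IsIntegrallyClosed R] [Field K] [Algebra R K] [IsFractionRing R K] [Ring A] [Nontrivial A]
    [Algebra R A] [Algebra K A] [IsScalarTower R K A] {x : A} (hx : IsIntegral R x)
    (hxK : x ∉ (algebraMap K A).range) {p : K[X]} (hp : p.Monic) (hdeg : p.natDegree ≤ 2)
    (hroot : aeval x p = 0) : p ∈ lifts (algebraMap R K) := by
  have hxK' : IsIntegral K x := hx.tower_top
  have hmin : p = minpoly K x :=
    eq_of_monic_of_dvd_of_natDegree_le (minpoly.monic hxK') hp (minpoly.dvd K x hroot)
      (hdeg.trans ((minpoly.two_le_natDegree_iff hxK').2 hxK))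
  obtain ⟨f, hf, hfx⟩ := hx
  have hdvd : p ∣ f.map (algebraMap R K) :=
    hmin ▸ minpoly.dvd K x (by rwa [aeval_map_algebraMap])
  obtain ⟨g, hg⟩ := IsIntegrallyClosed.eq_map_mul_C_of_dvd K hf hdvd
  rw [hp.leadingCoeff, map_one, mul_one] at hg
  exact ⟨g, hg⟩

variable {a b : ℚ}

lemma star_eq_two_re_smul_one_sub (z : ℍ[ℚ, a, b]) :
    star z = (2 * z.re) • (1 : ℍ[ℚ, a, b]) - z := by
  ext <;> simp [two_mul]

lemma mul_star_eq_smul_one (z : ℍ[ℚ, a, b]) :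
    z * star z = (z * star z).re • (1 : ℍ[ℚ, a, b]) := by
  rw [← Algebra.algebraMap_eq_smul_one, QuaternionAlgebra.coe_algebraMap]
  exact QuaternionAlgebra.mul_star_eq_coe z

lemma eq_re_smul_one_add_half_sub_star (z : ℍ[ℚ, a, b]) :
    z = z.re • (1 : ℍ[ℚ, a, b]) + (1 / 2 : ℚ) • (z - star z) := by
  ext <;> simp <;> ring

lemma smul_one_add_smul_sub_star (p q : ℚ) (w : ℍ[ℚ, a, b]) :
    p • (1 : ℍ[ℚ, a, b]) + q • w - star (p • (1 : ℍ[ℚ, a, b]) + q • w) = q • (w - star w) := by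
  ext <;> simp <;> ring

lemma Qq_sub_star (w : ℍ[ℚ, a, b]) :
    Qq a b (w - star w) = (2 * w.re) ^ 2 - 4 * (w * star w).re := by
  simp [Qq, QuaternionAlgebra.re_mul]; ring

lemma smul_one_add_half_sub_star {x : ℍ[ℚ, a, b]} (hx : x.re = 0) (c : ℚ) :
    c • (1 : ℍ[ℚ, a, b]) + (1 / 2 : ℚ) • x - star (c • (1 : ℍ[ℚ, a, b]) + (1 / 2 : ℚ) • x) = x := by
  ext <;> simp [hx] <;> ring

def reducedCharpoly (z : ℍ[ℚ, a, b]) : ℚ[X] := X ^ 2 - C (2 * z.re) * X + C (z * star z).re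

lemma reducedCharpoly_monic (z : ℍ[ℚ, a, b]) : (reducedCharpoly z).Monic := by
  unfold reducedCharpoly; monicity!

lemma natDegree_reducedCharpoly_le (z : ℍ[ℚ, a, b]) : (reducedCharpoly z).natDegree ≤ 2 := by
  unfold reducedCharpoly; compute_degree

lemma aeval_reducedCharpoly (z : ℍ[ℚ, a, b]) : aeval z (reducedCharpoly z) = 0 := by
  simp only [reducedCharpoly, map_add, map_sub, map_mul, map_pow, aeval_X, aeval_C,
    Algebra.algebraMap_eq_smul_one, smul_mul_assoc, one_mul]
  ext <;> simp [QuaternionAlgebra.re_mul, QuaternionAlgebra.imI_mul,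
    QuaternionAlgebra.imJ_mul, QuaternionAlgebra.imK_mul, sq] <;> ring

lemma coeff_one_reducedCharpoly (z : ℍ[ℚ, a, b]) :
    (reducedCharpoly z).coeff 1 = -(2 * z.re) := by
  simp [reducedCharpoly, coeff_C]

def zSpan (w : ℍ[ℚ, a, b]) : Set ℍ[ℚ, a, b] :=
  {z | ∃ m n : ℤ, z = m • (1 : ℍ[ℚ, a, b]) + n • w}

lemma self_mem_zSpan (w : ℍ[ℚ, a, b]) : w ∈ zSpan w := ⟨0, 1, by simp⟩

lemma zSpan_neg (w : ℍ[ℚ, a, b]) : zSpan (-w) = zSpan w := by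
  ext z
  constructor <;> rintro ⟨m, n, rfl⟩ <;> exact ⟨m, -n, by simp⟩

lemma zSpan_zsmul_one_add (k : ℤ) (w : ℍ[ℚ, a, b]) :
    zSpan (k • (1 : ℍ[ℚ, a, b]) + w) = zSpan w := by
  ext z
  constructor <;> rintro ⟨m, n, rfl⟩
  · exact ⟨m + n * k, n, by module⟩
  · exact ⟨m - n * k, n, by module⟩

lemma sub_star_eq_zsmul_of_mem_zSpan {w z : ℍ[ℚ, a, b]} (hz : z ∈ zSpan w) :
    ∃ n : ℤ, z - star z = n • (w - star w) := by
  obtain ⟨m, n, rfl⟩ := hz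
  refine ⟨n, ?_⟩
  simpa only [Int.cast_smul_eq_zsmul] using smul_one_add_smul_sub_star (m : ℚ) (n : ℚ) w

def quadOrder (w : ℍ[ℚ, a, b]) (hw : w * w ∈ zSpan w) : Subalgebra ℤ ℍ[ℚ, a, b] where
  carrier := zSpan w
  mul_mem' := by
    obtain ⟨c, d, hcd⟩ := hw
    rintro _ _ ⟨m, n, rfl⟩ ⟨m', n', rfl⟩
    refine ⟨m * m' + n * n' * c, m * n' + n * m' + n * n' * d, ?_⟩
    simp only [add_mul, mul_add, smul_mul_assoc, mul_smul_comm, one_mul, mul_one, hcd]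
    module
  add_mem' := by
    rintro _ _ ⟨m, n, rfl⟩ ⟨m', n', rfl⟩
    exact ⟨m + m', n + n', by module⟩
  algebraMap_mem' k := ⟨k, 0, by simp⟩

section Lattice

variable {O : Subalgebra ℤ ℍ[ℚ, a, b]}

lemma re_eq_zero_of_mem_Lset {x : ℍ[ℚ, a, b]} (hx : x ∈ Lset a b O) : x.re = 0 := by
  rcases hx with ⟨y, hy, rfl⟩ | ⟨hx, -⟩
  · simp [two_smul, hy.1]
  · exact hx.1

variable (O) in
open Classical in
def halfGen (x : ℍ[ℚ, a, b]) : ℍ[ℚ, a, b] :=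
  if ∃ y ∈ LMset a b O, x = 2 • y then (1 / 2 : ℚ) • x else (1 / 2 : ℚ) • (1 + x)

lemma halfGen_mem {x : ℍ[ℚ, a, b]} (hx : x ∈ Lset a b O) : halfGen O x ∈ O := by
  unfold halfGen
  split_ifs with h
  · obtain ⟨y, hy, rfl⟩ := h
    convert hy.2 using 1
    rw [two_smul, ← two_smul ℚ, smul_smul]
    norm_num
  · exact (hx.resolve_left h).2

lemma halfGen_sub_star {x : ℍ[ℚ, a, b]} (hx : x.re = 0) :
    halfGen O x - star (halfGen O x) = x := by
  unfold halfGen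
  split_ifs
  · simpa using smul_one_add_half_sub_star hx 0
  · rw [smul_add]
    exact smul_one_add_half_sub_star hx _

end Lattice

lemma IsPrimitiveIn.exists_intCast_eq {A : AddSubgroup ℍ[ℚ, a, b]} {x : ℍ[ℚ, a, b]}
    (hx : IsPrimitiveIn a b A x) {s : ℚ} (hs : s • x ∈ A) : ∃ n : ℤ, (n : ℚ) = s := by
  obtain ⟨u, v, huv⟩ : IsCoprime s.num s.den :=
    Int.isCoprime_iff_gcd_eq_one.2 s.reduced
  have hbezout : (u : ℚ) * s + v = (s.den : ℚ)⁻¹ := by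
    have h : (u : ℚ) * s.num + v * s.den = 1 := by exact_mod_cast huv
    rw [← Rat.mul_den_eq_num] at h
    exact eq_inv_of_mul_eq_one_left (by linear_combination h)
  have hy : ((s.den : ℚ)⁻¹) • x ∈ A := by
    convert add_mem (zsmul_mem hs u) (zsmul_mem hx.1 v) using 1
    rw [← Int.cast_smul_eq_zsmul ℚ, ← Int.cast_smul_eq_zsmul ℚ, smul_smul, ← add_smul, hbezout]
  have hx_eq : x = (s.den : ℤ) • ((s.den : ℚ)⁻¹ • x) := by
    rw [← Int.cast_smul_eq_zsmul ℚ, smul_smul, Int.cast_natCast, mul_inv_cancel₀ (by positivity),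
      one_smul]
  have hden1 : s.den = 1 := by
    have := Int.isUnit_iff.1 (hx.2 s.den _ hy hx_eq)
    omega
  exact ⟨s.num, by rw [← Rat.num_div_den s, hden1]; simp⟩

lemma IsEichlerOrder.isIntegral {O : Subalgebra ℤ ℍ[ℚ, a, b]} (hO : IsEichlerOrder a b O) :
    ∀ z ∈ O, IsIntegral ℤ z := by
  obtain ⟨O₁, -, ⟨⟨hfg, -⟩, -⟩, -, rfl⟩ := hO
  exact fun z hz => IsIntegral.of_mem_of_fg O₁ hfg z (Algebra.mem_inf.1 hz).1

section Integral

variable {O : Subalgebra ℤ ℍ[ℚ, a, b]} (hO : ∀ z ∈ O, IsIntegral ℤ z)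
include hO

lemma exists_intCast_eq_of_smul_one_mem {c : ℚ} (hc : c • (1 : ℍ[ℚ, a, b]) ∈ O) :
    ∃ m : ℤ, (m : ℚ) = c := by
  have h := hO _ hc
  rw [← Algebra.algebraMap_eq_smul_one, isIntegral_algebraMap_iff (algebraMap ℚ _).injective]
    at h
  exact IsIntegrallyClosed.isIntegral_iff.mp h

lemma exists_intCast_eq_two_re {z : ℍ[ℚ, a, b]} (hz : z ∈ O) :
    ∃ t : ℤ, (t : ℚ) = 2 * z.re := by
  by_cases hzℚ : z ∈ (algebraMap ℚ ℍ[ℚ, a, b]).range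
  · obtain ⟨c, rfl⟩ := hzℚ
    obtain ⟨m, hm⟩ := exists_intCast_eq_of_smul_one_mem hO
      (by rwa [← Algebra.algebraMap_eq_smul_one])
    exact ⟨2 * m, by simp [hm, QuaternionAlgebra.algebraMap_eq]⟩
  · obtain ⟨n, hn⟩ := (lifts_iff_coeff_lifts _).1 (mem_lifts_of_isIntegral (hO z hz) hzℚ
      (reducedCharpoly_monic z) (natDegree_reducedCharpoly_le z) (aeval_reducedCharpoly z)) 1
    rw [eq_intCast, coeff_one_reducedCharpoly] at hn
    exact ⟨-n, by rw [Int.cast_neg, hn, neg_neg]⟩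

lemma star_mem {z : ℍ[ℚ, a, b]} (hz : z ∈ O) : star z ∈ O := by
  obtain ⟨t, ht⟩ := exists_intCast_eq_two_re hO hz
  rw [star_eq_two_re_smul_one_sub, ← ht, Int.cast_smul_eq_zsmul]
  exact sub_mem (zsmul_mem (one_mem O) t) hz

lemma mul_self_mem_zSpan {w : ℍ[ℚ, a, b]} (hw : w ∈ O) : w * w ∈ zSpan w := by
  obtain ⟨t, ht⟩ := exists_intCast_eq_two_re hO hw
  obtain ⟨N, hN⟩ := exists_intCast_eq_of_smul_one_mem hO
    (mul_star_eq_smul_one w ▸ mul_mem hw (star_mem hO hw))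
  have h : w * star w = (N : ℚ) • (1 : ℍ[ℚ, a, b]) := hN ▸ mul_star_eq_smul_one w
  rw [star_eq_two_re_smul_one_sub, ← ht, mul_sub, mul_smul_comm, mul_one] at h
  refine ⟨-N, t, ?_⟩
  rw [← Int.cast_smul_eq_zsmul ℚ, ← Int.cast_smul_eq_zsmul ℚ, Int.cast_neg]
  linear_combination (norm := module) -h

lemma sub_star_mem_Lset {z : ℍ[ℚ, a, b]} (hz : z ∈ O) : z - star z ∈ Lset a b O := by
  obtain ⟨t, ht⟩ := exists_intCast_eq_two_re hO hz
  rcases Int.even_or_odd' t with ⟨k, rfl | rfl⟩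
  · refine Or.inl ⟨z - k • 1, ⟨?_, sub_mem hz (zsmul_mem (one_mem O) k)⟩, ?_⟩
    · simp only [← Int.cast_smul_eq_zsmul ℚ, QuaternionAlgebra.re_sub, QuaternionAlgebra.re_smul,
        QuaternionAlgebra.re_one, smul_eq_mul, mul_one]
      push_cast at ht
      linarith
    · rw [star_eq_two_re_smul_one_sub, ← ht, ← Int.cast_smul_eq_zsmul ℚ]
      push_cast
      module
  · refine Or.inr ⟨⟨by simp, sub_mem hz (star_mem hO hz)⟩, ?_⟩
    convert sub_mem hz (zsmul_mem (one_mem O) k) using 1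
    rw [star_eq_two_re_smul_one_sub, ← ht, ← Int.cast_smul_eq_zsmul ℚ]
    push_cast
    module

lemma mem_Lset_iff {x : ℍ[ℚ, a, b]} : x ∈ Lset a b O ↔ ∃ z ∈ O, z - star z = x :=
  ⟨fun hx => ⟨halfGen O x, halfGen_mem hx, halfGen_sub_star (re_eq_zero_of_mem_Lset hx)⟩,
    fun ⟨_, hz, hzx⟩ => hzx ▸ sub_star_mem_Lset hO hz⟩

variable (O) in
def Lsubgroup : AddSubgroup ℍ[ℚ, a, b] where
  carrier := Lset a b O
  zero_mem' := (mem_Lset_iff hO).2 ⟨0, zero_mem O, by simp⟩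
  add_mem' {x y} hx hy := by
    obtain ⟨z, hz, rfl⟩ := (mem_Lset_iff hO).1 hx
    obtain ⟨z', hz', rfl⟩ := (mem_Lset_iff hO).1 hy
    exact (mem_Lset_iff hO).2 ⟨z + z', add_mem hz hz', by rw [star_add]; abel⟩
  neg_mem' {x} hx := by
    obtain ⟨z, hz, rfl⟩ := (mem_Lset_iff hO).1 hx
    exact (mem_Lset_iff hO).2 ⟨-z, neg_mem hz, by rw [star_neg]; abel⟩

lemma zSpan_eq_of_sub_star_eq {w w' : ℍ[ℚ, a, b]} (hw : w ∈ O) (hw' : w' ∈ O)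
    (h : w - star w = w' - star w') : zSpan w = zSpan w' := by
  have hw_eq := eq_re_smul_one_add_half_sub_star w
  have hw'_eq := h ▸ eq_re_smul_one_add_half_sub_star w'
  have hshift : w = (w.re - w'.re) • (1 : ℍ[ℚ, a, b]) + w' := by
    linear_combination (norm := module) hw_eq - hw'_eq
  obtain ⟨k, hk⟩ := exists_intCast_eq_of_smul_one_mem hO
    (show (w.re - w'.re) • (1 : ℍ[ℚ, a, b]) ∈ O from
      (eq_sub_of_add_eq hshift.symm) ▸ sub_mem hw hw')
  rw [hshift, ← hk, Int.cast_smul_eq_zsmul, zSpan_zsmul_one_add]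

lemma isOptimalEmbImage_quadOrder {D : ℤ} {x w : ℍ[ℚ, a, b]}
    (hx : IsPrimitiveIn a b (Lset a b O) x) (hxD : Qq a b x = D) (hw : w ∈ O)
    (hwx : w - star w = x) :
    IsOptimalEmbImage a b O (quadOrder w (mul_self_mem_zSpan hO hw)) D := by
  refine ⟨w, rfl, by rw [← Qq_sub_star, hwx, hxD], ?_, ?_⟩
  · rintro _ ⟨m, n, rfl⟩
    exact add_mem (zsmul_mem (one_mem O) m) (zsmul_mem hw n)
  · rintro z hz ⟨p, q, rfl⟩
    obtain ⟨n, rfl⟩ := IsPrimitiveIn.exists_intCast_eq (A := Lsubgroup O hO) hx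
      (show q • x ∈ Lset a b O by
        rw [← hwx, ← smul_one_add_smul_sub_star p q w]; exact sub_star_mem_Lset hO hz)
    obtain ⟨m, rfl⟩ := exists_intCast_eq_of_smul_one_mem hO
      (show p • (1 : ℍ[ℚ, a, b]) ∈ O by
        rw [Int.cast_smul_eq_zsmul] at hz
        simpa using sub_mem hz (zsmul_mem hw n))
    exact ⟨m, n, by simp only [Int.cast_smul_eq_zsmul]⟩

lemma isPrimitiveIn_sub_star {S : Subalgebra ℤ ℍ[ℚ, a, b]} {w : ℍ[ℚ, a, b]}
    (hSw : (S : Set ℍ[ℚ, a, b]) = zSpan w) (hSO : S ≤ O)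
    (hopt : ∀ z ∈ O, (∃ p q : ℚ, z = p • (1 : ℍ[ℚ, a, b]) + q • w) → z ∈ S)
    (hx0 : w - star w ≠ 0) : IsPrimitiveIn a b (Lset a b O) (w - star w) := by
  have hwO : w ∈ O := hSO (show w ∈ (S : Set ℍ[ℚ, a, b]) from hSw ▸ self_mem_zSpan w)
  refine ⟨sub_star_mem_Lset hO hwO, fun k v hv hxv => ?_⟩
  have hk : (k : ℚ) ≠ 0 := by
    rintro hk
    apply hx0
    rw [hxv, ← Int.cast_smul_eq_zsmul ℚ, hk, zero_smul]
  obtain ⟨e, he, rfl⟩ := (mem_Lset_iff hO).1 hv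
  have he_im : e - star e = (k : ℚ)⁻¹ • (w - star w) := by
    rw [hxv, ← Int.cast_smul_eq_zsmul ℚ, smul_smul, inv_mul_cancel₀ hk, one_smul]
  -- `e = e.re + (e - ē)/2` and `e - ē = (w - w̄)/k`, so `e ∈ ℚ + ℚ w`
  have heS : e ∈ (S : Set ℍ[ℚ, a, b]) := hopt e he ⟨e.re - w.re / k, (k : ℚ)⁻¹, by
    rw [star_eq_two_re_smul_one_sub w] at he_im
    linear_combination (norm := module) eq_re_smul_one_add_half_sub_star e + (1 / 2 : ℚ) • he_im⟩
  rw [hSw] at heS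
  obtain ⟨n, hn⟩ := sub_star_eq_zsmul_of_mem_zSpan heS
  have hkn : ((k * n : ℤ) : ℚ) • (w - star w) = (1 : ℚ) • (w - star w) := by
    rw [Int.cast_smul_eq_zsmul, mul_smul, ← hn, ← hxv, one_smul]
  exact IsUnit.of_mul_eq_one n (by exact_mod_cast smul_left_injective ℚ hx0 hkn)

lemma zSpan_halfGen_eq_iff {x y : ℍ[ℚ, a, b]} (hx : IsPrimitiveIn a b (Lset a b O) x)
    (hy : IsPrimitiveIn a b (Lset a b O) y) :
    zSpan (halfGen O x) = zSpan (halfGen O y) ↔ x = y ∨ x = -y := by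
  have hx_re := re_eq_zero_of_mem_Lset hx.1
  have hy_re := re_eq_zero_of_mem_Lset hy.1
  constructor
  · intro h
    obtain ⟨n, hn⟩ := sub_star_eq_zsmul_of_mem_zSpan (h ▸ self_mem_zSpan (halfGen O x))
    rw [halfGen_sub_star hx_re, halfGen_sub_star hy_re] at hn
    rcases Int.isUnit_iff.1 (hx.2 n y hy.1 hn) with rfl | rfl
    · exact Or.inl (by simpa using hn)
    · exact Or.inr (by simpa using hn)
  · rintro (rfl | rfl)
    · rfl
    · rw [← zSpan_neg (halfGen O y)]
      apply zSpan_eq_of_sub_star_eq hO (halfGen_mem hx.1) (neg_mem (halfGen_mem hy.1))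
      rw [star_neg, halfGen_sub_star hx_re, neg_sub_neg, ← neg_sub, halfGen_sub_star hy_re]

lemma exists_halfGen_of_isOptimalEmbImage {D : ℤ} (hD : D ≠ 0) {S : Subalgebra ℤ ℍ[ℚ, a, b]}
    (hS : IsOptimalEmbImage a b O S D) :
    ∃ x, IsPrimitiveIn a b (Lset a b O) x ∧ Qq a b x = D ∧
      (S : Set ℍ[ℚ, a, b]) = zSpan (halfGen O x) := by
  obtain ⟨w, hSw, hdisc, hSO, hopt⟩ := hS
  have hxD : Qq a b (w - star w) = D := by rw [Qq_sub_star, hdisc]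
  have hx0 : w - star w ≠ 0 := by
    rintro h
    simp only [Qq, h, star_zero, mul_zero, QuaternionAlgebra.re_zero, neg_zero, eq_comm,
      Int.cast_eq_zero] at hxD
    exact hD hxD
  have hwO : w ∈ O := hSO (show w ∈ (S : Set ℍ[ℚ, a, b]) from hSw ▸ self_mem_zSpan w)
  have hx := isPrimitiveIn_sub_star hO hSw hSO hopt hx0
  refine ⟨w - star w, hx, hxD, ?_⟩
  rw [hSw]
  exact zSpan_eq_of_sub_star_eq hO hwO (halfGen_mem hx.1)
    (halfGen_sub_star (re_eq_zero_of_mem_Lset hx.1)).symm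

end Integral

theorem stmt11_general (a b : ℚ)
    (O : Subalgebra ℤ ℍ[ℚ, a, b]) (hO : IsEichlerOrder a b O)
    (D : ℤ) (hD : 0 < D) :
    ∃ F : {x : ℍ[ℚ, a, b] // IsPrimitiveIn a b (Lset a b O) x ∧ Qq a b x = (D : ℚ)} →
          {S : Subalgebra ℤ ℍ[ℚ, a, b] // IsOptimalEmbImage a b O S D},
      Function.Surjective F ∧
      (∀ x y, F x = F y ↔ (x.1 = y.1 ∨ x.1 = -y.1)) ∧
      (∀ x, (∃ y ∈ LMset a b O, x.1 = 2 • y) →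
        ((F x : Subalgebra ℤ ℍ[ℚ, a, b]) : Set ℍ[ℚ, a, b]) =
          {z | ∃ m n : ℤ, z = m • (1 : ℍ[ℚ, a, b]) + n • ((1 / 2 : ℚ) • x.1)}) ∧
      (∀ x, ¬(∃ y ∈ LMset a b O, x.1 = 2 • y) →
        ((F x : Subalgebra ℤ ℍ[ℚ, a, b]) : Set ℍ[ℚ, a, b]) =
          {z | ∃ m n : ℤ, z = m • (1 : ℍ[ℚ, a, b]) + n • ((1 / 2 : ℚ) • (1 + x.1))}) := by
  have hint := hO.isIntegral
  let F : {x : ℍ[ℚ, a, b] // IsPrimitiveIn a b (Lset a b O) x ∧ Qq a b x = (D : ℚ)} →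
      {S : Subalgebra ℤ ℍ[ℚ, a, b] // IsOptimalEmbImage a b O S D} := fun x =>
    ⟨quadOrder (halfGen O x.1) (mul_self_mem_zSpan hint (halfGen_mem x.2.1.1)),
      isOptimalEmbImage_quadOrder hint x.2.1 x.2.2 (halfGen_mem x.2.1.1)
        (halfGen_sub_star (re_eq_zero_of_mem_Lset x.2.1.1))⟩
  have hF x : ((F x : Subalgebra ℤ ℍ[ℚ, a, b]) : Set ℍ[ℚ, a, b]) = zSpan (halfGen O x.1) := rfl
  refine ⟨F, ?_, fun x y => ?_, fun x hx => by rw [hF, halfGen, if_pos hx]; rfl,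
    fun x hx => by rw [hF, halfGen, if_neg hx]; rfl⟩
  · rintro ⟨S, hS⟩
    obtain ⟨x, hx, hxD, hSx⟩ := exists_halfGen_of_isOptimalEmbImage hint hD.ne' hS
    exact ⟨⟨x, hx, hxD⟩, Subtype.ext (SetLike.coe_injective ((hF _).trans hSx.symm))⟩
  · rw [← zSpan_halfGen_eq_iff hint x.2.1 y.2.1, ← hF, ← hF, Subtype.ext_iff, SetLike.coe_set_eq]

/-- Bijection between primitive vectors `x ∈ L/{±1}` of length `Q(x) = D > 0` and (images of)
optimal embeddings `φ : 𝒪_D → 𝒪_𝔐` of the real quadratic order of discriminant `D`, up to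
Galois conjugation (an embedding up to Galois conjugation is identified with its image):
the map sends `x` to `ℤ⟨1, (1+x)/2⟩` if `x ∉ 2L_𝔐` and to `ℤ⟨1, x/2⟩` if `x ∈ 2L_𝔐`;
it is surjective and two primitive vectors have the same image iff they agree up to sign. -/
theorem stmt11 (a b : ℚ) (hindef : 0 < a ∨ 0 < b)
    (hdiv : ∀ x : ℍ[ℚ, a, b], x ≠ 0 → IsUnit x)
    (O : Subalgebra ℤ ℍ[ℚ, a, b]) (hO : IsEichlerOrder a b O)
    (D : ℤ) (hD : 0 < D) :
    ∃ F : {x : ℍ[ℚ, a, b] // IsPrimitiveIn a b (Lset a b O) x ∧ Qq a b x = (D : ℚ)} →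
          {S : Subalgebra ℤ ℍ[ℚ, a, b] // IsOptimalEmbImage a b O S D},
      Function.Surjective F ∧
      (∀ x y, F x = F y ↔ (x.1 = y.1 ∨ x.1 = -y.1)) ∧
      (∀ x, (∃ y ∈ LMset a b O, x.1 = 2 • y) →
        ((F x : Subalgebra ℤ ℍ[ℚ, a, b]) : Set ℍ[ℚ, a, b]) =
          {z | ∃ m n : ℤ, z = m • (1 : ℍ[ℚ, a, b]) + n • ((1 / 2 : ℚ) • x.1)}) ∧
      (∀ x, ¬(∃ y ∈ LMset a b O, x.1 = 2 • y) →
        ((F x : Subalgebra ℤ ℍ[ℚ, a, b]) : Set ℍ[ℚ, a, b]) =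
          {z | ∃ m n : ℤ, z = m • (1 : ℍ[ℚ, a, b]) + n • ((1 / 2 : ℚ) • (1 + x.1))}) :=
  stmt11_general a b O hO D hD
end
end

section
/- In Flensted-Jensen coordinates g = a_b ρ_t k_θ with ρ_t = [[cosh t, sinh t],[sinh t, cosh t]] and a_b = diag(e^{b/2}, e^{-b/2}), the hyperbolic Laplacian on ℍ takes the form Δ = -(1/4)(∂_t² + 2 tanh(2t) ∂_t + 4 ∂_b² / cosh(2t)²), and the invariant measure dx dy/y² equals 2 cosh(2t) dt db. -/
noncomputable section

open Matrix

/-- Möbius action of a real `2 × 2` matrix on `ℂ`. -/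
def moeb (g : Matrix (Fin 2) (Fin 2) ℝ) (z : ℂ) : ℂ :=
  ((g 0 0 : ℂ) * z + (g 0 1 : ℂ)) / ((g 1 0 : ℂ) * z + (g 1 1 : ℂ))

/-- `a_b = diag(e^{b/2}, e^{-b/2})` -/
def aMat (b : ℝ) : Matrix (Fin 2) (Fin 2) ℝ :=
  !![Real.exp (b / 2), 0; 0, Real.exp (-b / 2)]

/-- `ρ_t = [[cosh t, sinh t],[sinh t, cosh t]]` -/
def rhoMat (t : ℝ) : Matrix (Fin 2) (Fin 2) ℝ :=
  !![Real.cosh t, Real.sinh t; Real.sinh t, Real.cosh t]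

/-- the point `a_b ρ_t · i` of the upper half plane (Flensted-Jensen coordinates). -/
def ptFJ (b t : ℝ) : ℂ := moeb (aMat b * rhoMat t) Complex.I

/-- the hyperbolic Laplacian `Δf = -y²(∂ₓ² + ∂_y²)f` of a function `f(x,y)`. -/
def hypLap (f : ℝ → ℝ → ℂ) (x y : ℝ) : ℂ :=
  -(y : ℂ) ^ 2 *
    (deriv (deriv (fun x' => f x' y)) x + deriv (deriv (fun y' => f x y')) y)

namespace Stmt17Aux

open Real

def XX (b t : ℝ) : ℝ := exp b * sinh (2*t) / cosh (2*t)
def YY (b t : ℝ) : ℝ := exp b / cosh (2*t)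
def Xt (b t : ℝ) : ℝ := 2 * exp b / cosh (2*t)^2
def Yt (b t : ℝ) : ℝ := -2 * exp b * sinh (2*t) / cosh (2*t)^2
def Xtt (b t : ℝ) : ℝ := -8 * exp b * sinh (2*t) / cosh (2*t)^3
def Ytt (b t : ℝ) : ℝ := (8 * exp b * sinh (2*t)^2 - 4 * exp b * cosh (2*t)^2) / cosh (2*t)^3

lemma cosh_ne (t : ℝ) : cosh (2*t) ≠ 0 := (Real.cosh_pos _).ne'

lemma hd_two (t : ℝ) : HasDerivAt (fun s : ℝ => 2*s) 2 t := by
  simpa using (hasDerivAt_id t).const_mul 2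

lemma hd_sinh2 (t : ℝ) : HasDerivAt (fun s : ℝ => sinh (2*s)) (2 * cosh (2*t)) t := by
  simpa [mul_comm] using (hd_two t).sinh

lemma hd_cosh2 (t : ℝ) : HasDerivAt (fun s : ℝ => cosh (2*s)) (2 * sinh (2*t)) t := by
  simpa [mul_comm] using (hd_two t).cosh

lemma pyth (t : ℝ) : cosh (2*t)^2 - sinh (2*t)^2 = 1 := Real.cosh_sq_sub_sinh_sq _

lemma hd_XX_t (b t : ℝ) : HasDerivAt (fun s => XX b s) (Xt b t) t := by
  have h := ((hd_sinh2 t).div (hd_cosh2 t) (cosh_ne t)).const_mul (exp b)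
  have he : (fun s => XX b s) = fun s => exp b * (sinh (2*s) / cosh (2*s)) := by
    funext s; rw [XX, mul_div_assoc]
  rw [he]
  refine h.congr_deriv ?_
  symm
  rw [Xt]
  field_simp
  linear_combination (-1:ℝ) * pyth t

lemma hd_YY_t (b t : ℝ) : HasDerivAt (fun s => YY b s) (Yt b t) t := by
  have h := ((hd_cosh2 t).inv (cosh_ne t)).const_mul (exp b)
  have he : (fun s => YY b s) = fun s => exp b * (cosh (2*s))⁻¹ := by
    funext s; rw [YY, div_eq_mul_inv]
  rw [he]
  refine h.congr_deriv ?_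
  symm
  rw [Yt]; field_simp

lemma hd_X_b (b t : ℝ) : HasDerivAt (fun b' => XX b' t) (XX b t) b := by
  have h := (Real.hasDerivAt_exp b).mul_const (sinh (2*t) / cosh (2*t))
  have he : (fun b' => XX b' t) = fun b' => exp b' * (sinh (2*t) / cosh (2*t)) := by
    funext b'; rw [XX, mul_div_assoc]
  rw [he, XX, mul_div_assoc]
  exact h

lemma hd_Y_b (b t : ℝ) : HasDerivAt (fun b' => YY b' t) (YY b t) b := by
  have h := (Real.hasDerivAt_exp b).mul_const (cosh (2*t))⁻¹
  have he : (fun b' => YY b' t) = fun b' => exp b' * (cosh (2*t))⁻¹ := by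
    funext b'; rw [YY, div_eq_mul_inv]
  rw [he, YY, div_eq_mul_inv]
  exact h

lemma hd_Xt_t (b t : ℝ) : HasDerivAt (fun s => Xt b s) (Xtt b t) t := by
  have hsq := (hd_cosh2 t).pow 2
  have hne : cosh (2*t)^2 ≠ 0 := pow_ne_zero _ (cosh_ne t)
  have h := (hsq.inv hne).const_mul (2 * exp b)
  have he : (fun s => Xt b s) = fun s => 2 * exp b * (cosh (2*s)^2)⁻¹ := by
    funext s; rw [Xt, div_eq_mul_inv]
  rw [he]
  refine h.congr_deriv ?_
  symm
  rw [Xtt]; simp only [Pi.pow_apply]; field_simp; ring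

lemma hd_Yt_t (b t : ℝ) : HasDerivAt (fun s => Yt b s) (Ytt b t) t := by
  have hsq := (hd_cosh2 t).pow 2
  have hne : cosh (2*t)^2 ≠ 0 := pow_ne_zero _ (cosh_ne t)
  have h := ((hd_sinh2 t).div hsq hne).const_mul (-2 * exp b)
  have he : (fun s => Yt b s) = fun s => -2 * exp b * (sinh (2*s) / cosh (2*s)^2) := by
    funext s; rw [Yt, mul_div_assoc]
  rw [he]
  refine h.congr_deriv ?_
  symm
  rw [Ytt]; simp only [Pi.pow_apply]; field_simp; ring

/-! ### ptFJ in coordinates -/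

lemma moeb_apply (a b c d : ℝ) (z : ℂ) :
    moeb !![a, b; c, d] z = ((a:ℂ) * z + b) / ((c:ℂ) * z + d) := by
  simp [moeb]

lemma ptFJ_eq (b t : ℝ) : ptFJ b t = Complex.I * (YY b t : ℂ) + (XX b t : ℂ) := by
  have hc : cosh t ≠ 0 := (Real.cosh_pos t).ne'
  have hc2 : cosh (2*t) ≠ 0 := (Real.cosh_pos _).ne'
  have hmul : (aMat b * rhoMat t) = !![Real.exp (b/2) * cosh t, Real.exp (b/2) * sinh t;
      Real.exp (-b/2) * sinh t, Real.exp (-b/2) * cosh t] := by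
    ext i j
    fin_cases i <;> fin_cases j <;>
      simp [aMat, rhoMat, Matrix.mul_apply, Fin.sum_univ_two]
  rw [ptFJ, hmul, moeb_apply]
  have hden : ((Real.exp (-b/2) * sinh t : ℝ) : ℂ) * Complex.I +
      ((Real.exp (-b/2) * cosh t : ℝ) : ℂ) ≠ 0 := by
    intro h
    have h' := congrArg Complex.re h
    simp only [Complex.add_re, Complex.mul_re, Complex.I_re, Complex.I_im, Complex.ofReal_re,
      Complex.ofReal_im, Complex.zero_re] at h'
    have : Real.exp (-b/2) * cosh t > 0 := mul_pos (Real.exp_pos _) (Real.cosh_pos t)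
    nlinarith
  rw [div_eq_iff hden]
  have h2s : sinh (2*t) = 2 * sinh t * cosh t := by rw [two_mul, Real.sinh_add]; ring
  have h2c : cosh (2*t) = cosh t ^ 2 + sinh t ^ 2 := by rw [two_mul, Real.cosh_add]; ring
  have hpyth : cosh t ^ 2 - sinh t ^ 2 = 1 := Real.cosh_sq_sub_sinh_sq t
  have hexp : Real.exp (b/2) = Real.exp b * Real.exp (-b/2) := by
    rw [← Real.exp_add]; ring_nf
  apply Complex.ext
  · simp only [XX, YY, Complex.add_re, Complex.add_im, Complex.mul_re, Complex.mul_im,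
      Complex.I_re, Complex.I_im, Complex.ofReal_re, Complex.ofReal_im]
    field_simp
    rw [h2s, h2c, hexp]; ring_nf
    linear_combination (-(rexp b * rexp (b*(-1/2)) * sinh t)) * hpyth
  · simp only [XX, YY, Complex.add_re, Complex.add_im, Complex.mul_re, Complex.mul_im,
      Complex.I_re, Complex.I_im, Complex.ofReal_re, Complex.ofReal_im]
    field_simp
    rw [h2s, h2c, hexp]; ring_nf
    linear_combination (rexp b * rexp (b*(-1/2)) * cosh t) * hpyth

lemma ptFJ_re (b t : ℝ) : (ptFJ b t).re = XX b t := by rw [ptFJ_eq]; simp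
lemma ptFJ_im (b t : ℝ) : (ptFJ b t).im = YY b t := by rw [ptFJ_eq]; simp

/-! ### partial derivatives -/

def pdv (v : ℝ × ℝ) (G : ℝ × ℝ → ℂ) (p : ℝ × ℝ) : ℂ := fderiv ℝ G p v

lemma contDiff_pdv {G : ℝ × ℝ → ℂ} (hG : ContDiff ℝ (⊤ : ℕ∞) G) (v : ℝ × ℝ) :
    ContDiff ℝ (⊤ : ℕ∞) (pdv v G) :=
  (hG.fderiv_right (by simp)).clm_apply contDiff_const

lemma hasDerivAt_comp_curve {G : ℝ × ℝ → ℂ} (hG : ContDiff ℝ (⊤ : ℕ∞) G) {c : ℝ → ℝ × ℝ}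
    {c' : ℝ × ℝ} {t : ℝ} (hc : HasDerivAt c c' t) :
    HasDerivAt (fun s => G (c s))
      (c'.1 • pdv (1,0) G (c t) + c'.2 • pdv (0,1) G (c t)) t := by
  have hd := ((hG.differentiable (by simp)) (c t)).hasFDerivAt
  have h := hd.comp_hasDerivAt t hc
  refine h.congr_deriv ?_
  symm
  have hv : c' = c'.1 • ((1:ℝ),(0:ℝ)) + c'.2 • ((0:ℝ),(1:ℝ)) := by
    ext <;> simp
  conv_rhs => rw [hv, map_add, _root_.map_smul, _root_.map_smul]
  rfl

lemma pdv_comm {G : ℝ × ℝ → ℂ} (hG : ContDiff ℝ (⊤ : ℕ∞) G) (v w : ℝ × ℝ) (p : ℝ × ℝ) :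
    pdv v (pdv w G) p = pdv w (pdv v G) p := by
  have hsymm : IsSymmSndFDerivAt ℝ G p :=
    (hG.contDiffAt).isSymmSndFDerivAt (by rw [minSmoothness_of_isRCLikeNormedField]; exact WithTop.coe_le_coe.mpr le_top)
  have key : ∀ u z : ℝ × ℝ, pdv u (pdv z G) p = fderiv ℝ (fderiv ℝ G) p u z := by
    intro u z
    have hdiff : DifferentiableAt ℝ (fderiv ℝ G) p :=
      ((hG.fderiv_right (m := (⊤ : ℕ∞)) (by simp)).differentiable (by simp)).differentiableAt
    have : pdv z G = fun r => (fderiv ℝ G r) z := rfl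
    rw [pdv, this, fderiv_clm_apply hdiff (differentiableAt_const z)]
    simp
  rw [key, key, hsymm v w]

/-! ### derivative formulas along the coordinate lines and curves -/

lemma derivx_eq {G : ℝ × ℝ → ℂ} (hG : ContDiff ℝ (⊤ : ℕ∞) G) (y : ℝ) :
    deriv (fun x' => G (x', y)) = fun x' => pdv (1,0) G (x', y) := by
  funext x
  have h := hasDerivAt_comp_curve hG ((hasDerivAt_id x).prodMk (hasDerivAt_const x y))
  simpa using h.deriv

lemma derivy_eq {G : ℝ × ℝ → ℂ} (hG : ContDiff ℝ (⊤ : ℕ∞) G) (x : ℝ) :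
    deriv (fun y' => G (x, y')) = fun y' => pdv (0,1) G (x, y') := by
  funext y
  have h := hasDerivAt_comp_curve hG ((hasDerivAt_const y x).prodMk (hasDerivAt_id y))
  simpa using h.deriv

lemma hd_tcurve {G : ℝ × ℝ → ℂ} (hG : ContDiff ℝ (⊤ : ℕ∞) G) (b s : ℝ) :
    HasDerivAt (fun s' => G (XX b s', YY b s'))
      (Xt b s • pdv (1,0) G (XX b s, YY b s) + Yt b s • pdv (0,1) G (XX b s, YY b s)) s :=
  hasDerivAt_comp_curve hG ((hd_XX_t b s).prodMk (hd_YY_t b s))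

lemma hd_bcurve {G : ℝ × ℝ → ℂ} (hG : ContDiff ℝ (⊤ : ℕ∞) G) (s t : ℝ) :
    HasDerivAt (fun s' => G (XX s' t, YY s' t))
      (XX s t • pdv (1,0) G (XX s t, YY s t) + YY s t • pdv (0,1) G (XX s t, YY s t)) s :=
  hasDerivAt_comp_curve hG ((hd_X_b s t).prodMk (hd_Y_b s t))

lemma derivt_eq {G : ℝ × ℝ → ℂ} (hG : ContDiff ℝ (⊤ : ℕ∞) G) (b : ℝ) :
    deriv (fun s => G (XX b s, YY b s)) =
      fun s => Xt b s • pdv (1,0) G (XX b s, YY b s) + Yt b s • pdv (0,1) G (XX b s, YY b s) := by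
  funext s; exact (hd_tcurve hG b s).deriv

lemma derivb_eq {G : ℝ × ℝ → ℂ} (hG : ContDiff ℝ (⊤ : ℕ∞) G) (t : ℝ) :
    deriv (fun s => G (XX s t, YY s t)) =
      fun s => XX s t • pdv (1,0) G (XX s t, YY s t) + YY s t • pdv (0,1) G (XX s t, YY s t) := by
  funext s; exact (hd_bcurve hG s t).deriv

end Stmt17Aux

open Stmt17Aux Real in
/-- In Flensted-Jensen coordinates `z = a_b ρ_t · i` the hyperbolic Laplacian becomes
`Δ = -(1/4)(∂ₜ² + 2 tanh(2t) ∂ₜ + 4 ∂_b²/cosh(2t)²)`, and the invariant measure `dx dy/y²`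
equals `2 cosh(2t) dt db` (i.e. the Jacobian of `(b,t) ↦ (x,y)` divided by `y²` is
`2 cosh 2t`). -/
theorem stmt17 :
    (∀ f : ℝ → ℝ → ℂ, ContDiff ℝ (⊤ : ℕ∞) (fun p : ℝ × ℝ => f p.1 p.2) →
      ∀ b t : ℝ,
        hypLap f (ptFJ b t).re (ptFJ b t).im =
          -(1 / 4 : ℂ) *
            (deriv (deriv (fun t' => f (ptFJ b t').re (ptFJ b t').im)) t
              + ((2 * Real.tanh (2 * t) : ℝ) : ℂ) *
                  deriv (fun t' => f (ptFJ b t').re (ptFJ b t').im) t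
              + ((4 / Real.cosh (2 * t) ^ 2 : ℝ) : ℂ) *
                  deriv (deriv (fun b' => f (ptFJ b' t).re (ptFJ b' t).im)) b)) ∧
    (∀ b t : ℝ,
      |deriv (fun b' => (ptFJ b' t).re) b * deriv (fun t' => (ptFJ b t').im) t -
          deriv (fun t' => (ptFJ b t').re) t * deriv (fun b' => (ptFJ b' t).im) b| /
        ((ptFJ b t).im) ^ 2 = 2 * Real.cosh (2 * t)) := by
  constructor
  · intro f hF b t
    have hF' : ContDiff ℝ (⊤ : ℕ∞) (fun p : ℝ × ℝ => f p.1 p.2) := hF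
    set F : ℝ × ℝ → ℂ := fun p : ℝ × ℝ => f p.1 p.2 with hFdef
    simp only [hypLap, ptFJ_re, ptFJ_im]
    -- replace f by F
    have e1 : (fun x' => f x' (YY b t)) = (fun x' => F (x', YY b t)) := rfl
    have e2 : (fun y' => f (XX b t) y') = (fun y' => F (XX b t, y')) := rfl
    have e3 : (fun t' => f (XX b t') (YY b t')) = (fun s => F (XX b s, YY b s)) := rfl
    have e4 : (fun b' => f (XX b' t) (YY b' t)) = (fun s => F (XX s t, YY s t)) := rfl
    rw [e1, e2, e3, e4]
    have hG1 : ContDiff ℝ (⊤ : ℕ∞) (pdv (1,0) F) := contDiff_pdv hF' (1,0)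
    have hG2 : ContDiff ℝ (⊤ : ℕ∞) (pdv (0,1) F) := contDiff_pdv hF' (0,1)
    -- second derivatives in x and y
    rw [derivx_eq hF', derivy_eq hF', derivx_eq hG1, derivy_eq hG2]
    -- first and second derivative along the t-curve
    rw [derivt_eq hF', derivb_eq hF']
    have htt :
        deriv (fun s => Xt b s • pdv (1,0) F (XX b s, YY b s)
            + Yt b s • pdv (0,1) F (XX b s, YY b s)) t =
          (Xt b t • (Xt b t • pdv (1,0) (pdv (1,0) F) (XX b t, YY b t)
                + Yt b t • pdv (0,1) (pdv (1,0) F) (XX b t, YY b t))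
            + Xtt b t • pdv (1,0) F (XX b t, YY b t))
          + (Yt b t • (Xt b t • pdv (1,0) (pdv (0,1) F) (XX b t, YY b t)
                + Yt b t • pdv (0,1) (pdv (0,1) F) (XX b t, YY b t))
            + Ytt b t • pdv (0,1) F (XX b t, YY b t)) :=
      (((hd_Xt_t b t).smul (hd_tcurve hG1 b t)).add
        ((hd_Yt_t b t).smul (hd_tcurve hG2 b t))).deriv
    have hbb :
        deriv (fun s => XX s t • pdv (1,0) F (XX s t, YY s t)
            + YY s t • pdv (0,1) F (XX s t, YY s t)) b =
          (XX b t • (XX b t • pdv (1,0) (pdv (1,0) F) (XX b t, YY b t)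
                + YY b t • pdv (0,1) (pdv (1,0) F) (XX b t, YY b t))
            + XX b t • pdv (1,0) F (XX b t, YY b t))
          + (YY b t • (XX b t • pdv (1,0) (pdv (0,1) F) (XX b t, YY b t)
                + YY b t • pdv (0,1) (pdv (0,1) F) (XX b t, YY b t))
            + YY b t • pdv (0,1) F (XX b t, YY b t)) :=
      (((hd_X_b b t).smul (hd_bcurve hG1 b t)).add
        ((hd_Y_b b t).smul (hd_bcurve hG2 b t))).deriv
    rw [htt, hbb]
    rw [pdv_comm hF' (0,1) (1,0) (XX b t, YY b t)]
    -- algebra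
    simp only [← Complex.ofReal_pow]
    rw [show -(1/4 : ℂ) = ((-(1/4) : ℝ) : ℂ) by norm_num,
      show (-((((YY b t)^2 : ℝ)) : ℂ)) = ((-((YY b t)^2) : ℝ) : ℂ) by push_cast; ring]
    simp only [← Complex.real_smul]
    match_scalars
    all_goals simp only [XX, YY, Xt, Yt, Xtt, Ytt, Real.tanh_eq_sinh_div_cosh]
    all_goals field_simp
    all_goals first
      | linear_combination (0:ℝ) * pyth t
      | linear_combination (-4:ℝ) * pyth t
      | linear_combination (-4 * exp b^2 * cosh (2*t)^6) * pyth t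
      | linear_combination (-4 * exp b * cosh (2*t)^6) * pyth t
      | linear_combination (-4 * exp b) * pyth t
  · intro b t
    have e1 : (fun b' => (ptFJ b' t).re) = fun b' => XX b' t := by
      funext b'; exact ptFJ_re b' t
    have e2 : (fun t' => (ptFJ b t').im) = fun t' => YY b t' := by
      funext t'; exact ptFJ_im b t'
    have e3 : (fun t' => (ptFJ b t').re) = fun t' => XX b t' := by
      funext t'; exact ptFJ_re b t'
    have e4 : (fun b' => (ptFJ b' t).im) = fun b' => YY b' t := by
      funext b'; exact ptFJ_im b' t
    rw [e1, e2, e3, e4, ptFJ_im, (hd_X_b b t).deriv, (hd_YY_t b t).deriv,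
      (hd_XX_t b t).deriv, (hd_Y_b b t).deriv]
    have hkey : XX b t * Yt b t - Xt b t * YY b t = -(2 * exp b ^ 2 / cosh (2*t)) := by
      rw [XX, Yt, Xt, YY]
      field_simp
      linear_combination (1:ℝ) * pyth t
    rw [hkey, abs_neg, abs_of_pos (by positivity)]
    rw [YY]
    field_simp
end
end

section
/- Let f be a smooth eigenfunction of Δ on ℍ with eigenvalue λ = s(1-s), periodic under z ↦ e^{b₀}z for some b₀ > 0. For n ∈ ℤ let c_n(t) = (1/b₀) ∫₀^{b₀} f(a_b ρ_t · i) e(-nb/b₀) db. Then the substitution u = tanh(2t) and c̃_n(u) = cosh(2t)^{1/2} c_n(t) transforms the ODE ∂_t² c_n + 2 tanh(2t) ∂_t c_n - 4(2πn/b₀)²/cosh(2t)² · c_n + 4λ c_n = 0 into the Legendre differential equation for c̃_n(u) on (-1,1) with parameters μ = ±(s - 1/2) and ν = -1/2 ± 2πni/b₀. -/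
set_option maxHeartbeats 1000000

noncomputable section

open Matrix

/-- inverse hyperbolic tangent -/
def artanh (x : ℝ) : ℝ := Real.log ((1 + x) / (1 - x)) / 2

/- ## Auxiliary lemmas -/

open intervalIntegral MeasureTheory in
lemma hasDerivAt_parametric (G : ℝ × ℝ → ℂ) (hG : ContDiff ℝ (⊤ : ℕ∞) G) (a b : ℝ) (t₀ : ℝ) :
    HasDerivAt (fun t => ∫ x in a..b, G (t, x))
      (∫ x in a..b, fderiv ℝ G (t₀, x) (1, 0)) t₀ := by
  set G' : ℝ × ℝ → ℂ := fun p => fderiv ℝ G p (1, 0) with hG'def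
  have hGc : Continuous G := hG.continuous
  have hG'c : Continuous G' :=
    (ContinuousLinearMap.apply ℝ ℂ ((1:ℝ),(0:ℝ))).continuous.comp (hG.continuous_fderiv (by simp))
  have hdiff : ∀ (x t : ℝ), HasDerivAt (fun t => G (t, x)) (G' (t, x)) t := by
    intro x t
    have h1 : HasDerivAt (fun t : ℝ => (t, x)) ((1:ℝ), (0:ℝ)) t :=
      (hasDerivAt_id t).prodMk (hasDerivAt_const _ _)
    exact ((hG.differentiable (by simp) (t, x)).hasFDerivAt.comp_hasDerivAt t h1)
  have hcont : ∀ t, Continuous fun x => G (t, x) := fun t =>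
    hGc.comp (continuous_const.prodMk continuous_id)
  have hcont' : ∀ t, Continuous fun x => G' (t, x) := fun t =>
    hG'c.comp (continuous_const.prodMk continuous_id)
  obtain ⟨C, hC⟩ : ∃ C, ∀ p ∈ (Set.Icc (t₀-1) (t₀+1)) ×ˢ Set.uIcc a b, ‖G' p‖ ≤ C :=
    (isCompact_Icc.prod isCompact_uIcc).exists_bound_of_continuousOn hG'c.continuousOn
  have key := intervalIntegral.hasDerivAt_integral_of_dominated_loc_of_deriv_le
    (F := fun t x => G (t, x)) (F' := fun t x => G' (t, x)) (x₀ := t₀)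
    (a := a) (b := b) (bound := fun _ => C) (μ := volume) (Metric.ball_mem_nhds t₀ one_pos)
    (Filter.Eventually.of_forall fun t => (hcont t).aestronglyMeasurable)
    ((hcont t₀).intervalIntegrable _ _)
    ((hcont' t₀).aestronglyMeasurable)
    (Filter.Eventually.of_forall fun x hx t ht => by
      refine hC (t, x) ⟨?_, Set.uIoc_subset_uIcc hx⟩
      have := Metric.mem_ball.mp ht
      rw [Real.dist_eq] at this
      constructor <;> [linarith [abs_lt.mp this]; linarith [abs_lt.mp this]])
    intervalIntegrable_const
    (Filter.Eventually.of_forall fun x hx t ht => hdiff x t)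
  exact key.2

lemma contDiff_Gd (G : ℝ × ℝ → ℂ) (hG : ContDiff ℝ (⊤ : ℕ∞) G) :
    ContDiff ℝ (⊤ : ℕ∞) (fun p : ℝ × ℝ => fderiv ℝ G p (1, 0)) :=
  (hG.fderiv_right le_rfl).clm_apply contDiff_const

lemma ptFJ_eq (b t : ℝ) : ptFJ b t =
    Complex.ofReal (Real.exp b * Real.tanh (2*t)) +
      Complex.I * Complex.ofReal (Real.exp b / Real.cosh (2*t)) := by
  have hc2 : Real.cosh (2*t) = Real.cosh t ^ 2 + Real.sinh t ^ 2 := by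
    rw [Real.cosh_two_mul]
  have hs2 : Real.sinh (2*t) = 2 * Real.sinh t * Real.cosh t := Real.sinh_two_mul t
  have hid : Real.cosh t ^ 2 - Real.sinh t ^ 2 = 1 := Real.cosh_sq_sub_sinh_sq t
  have hcpos : (0:ℝ) < Real.cosh t := Real.cosh_pos t
  have hc2pos : (0:ℝ) < Real.cosh (2*t) := Real.cosh_pos (2*t)
  have e00 : (aMat b * rhoMat t) 0 0 = Real.exp (b/2) * Real.cosh t := by
    simp [aMat, rhoMat, Matrix.mul_apply, Fin.sum_univ_succ]
  have e01 : (aMat b * rhoMat t) 0 1 = Real.exp (b/2) * Real.sinh t := by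
    simp [aMat, rhoMat, Matrix.mul_apply, Fin.sum_univ_succ]
  have e10 : (aMat b * rhoMat t) 1 0 = Real.exp (-b/2) * Real.sinh t := by
    simp [aMat, rhoMat, Matrix.mul_apply, Fin.sum_univ_succ]
  have e11 : (aMat b * rhoMat t) 1 1 = Real.exp (-b/2) * Real.cosh t := by
    simp [aMat, rhoMat, Matrix.mul_apply, Fin.sum_univ_succ]
  rw [ptFJ, moeb, e00, e01, e10, e11]
  have hden : ((Real.exp (-b/2) * Real.sinh t : ℝ) : ℂ) * Complex.I
      + ((Real.exp (-b/2) * Real.cosh t : ℝ) : ℂ) ≠ 0 := by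
    intro h
    have h2 := congrArg Complex.re h
    simp only [Complex.add_re, Complex.mul_re, Complex.ofReal_re, Complex.ofReal_im,
      Complex.I_re, Complex.I_im, Complex.zero_re] at h2
    nlinarith [Real.exp_pos (-b/2)]
  rw [div_eq_iff hden]
  have key : Real.exp b * Real.exp (-b/2) = Real.exp (b/2) := by
    rw [← Real.exp_add]; congr 1; ring
  apply Complex.ext <;>
    simp only [Complex.add_re, Complex.add_im, Complex.mul_re, Complex.mul_im,
      Complex.ofReal_re, Complex.ofReal_im, Complex.I_re, Complex.I_im] <;>
    rw [Real.tanh_eq_sinh_div_cosh] <;> field_simp <;> rw [hc2, hs2]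
  · have key' : Real.exp (-(b/2)) = Real.exp (-b/2) := by rw [neg_div]
    linear_combination (-(2*Real.sinh t*Real.cosh t^2 - Real.sinh t)) * key
      + (- Real.exp (b/2) * Real.sinh t) * hid
      + (-(2*Real.cosh t^2*Real.sinh t*Real.exp b) + Real.sinh t*Real.exp b) * key'
  · have key' : Real.exp (-(b/2)) = Real.exp (-b/2) := by rw [neg_div]
    linear_combination (-(2*Real.sinh t^2*Real.cosh t + Real.cosh t)) * key
      + (Real.exp (b/2) * Real.cosh t) * hid
      + (-(2*Real.cosh t*Real.sinh t^2*Real.exp b) - Real.cosh t*Real.exp b) * key'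

lemma ptFJ_re (b t : ℝ) : (ptFJ b t).re = Real.exp b * Real.tanh (2*t) := by
  rw [ptFJ_eq]
  simp only [Complex.add_re, Complex.mul_re, Complex.I_re, Complex.I_im, Complex.ofReal_re,
    Complex.ofReal_im, zero_mul, one_mul, mul_zero]
  ring

lemma ptFJ_im (b t : ℝ) : (ptFJ b t).im = Real.exp b / Real.cosh (2*t) := by
  rw [ptFJ_eq]
  simp only [Complex.add_im, Complex.mul_im, Complex.I_re, Complex.I_im, Complex.ofReal_re,
    Complex.ofReal_im, zero_mul, one_mul, mul_zero]
  ring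

lemma tanh_artanh {x : ℝ} (h1 : -1 < x) (h2 : x < 1) : Real.tanh (artanh x) = x := by
  have h1' : (0:ℝ) < 1 + x := by linarith
  have h2' : (0:ℝ) < 1 - x := by linarith
  have hr : (0:ℝ) < (1 + x) / (1 - x) := div_pos h1' h2'
  set a := artanh x with ha
  have hE2 : Real.exp a * Real.exp a = (1 + x) / (1 - x) := by
    rw [← Real.exp_add]
    have : a + a = Real.log ((1 + x) / (1 - x)) := by rw [ha, artanh]; ring
    rw [this, Real.exp_log hr]
  have hEpos : (0:ℝ) < Real.exp a := Real.exp_pos a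
  rw [Real.tanh_eq_sinh_div_cosh, Real.sinh_eq, Real.cosh_eq, Real.exp_neg]
  have hden : Real.exp a + (Real.exp a)⁻¹ ≠ 0 := by positivity
  have hE2' : (1 - x) * (Real.exp a * Real.exp a) = 1 + x := by
    rw [hE2]; field_simp
  field_simp
  linear_combination hE2'

lemma hasDerivAt_artanh {x : ℝ} (h1 : -1 < x) (h2 : x < 1) :
    HasDerivAt artanh (1 / (1 - x^2)) x := by
  have h1' : (0:ℝ) < 1 + x := by linarith
  have h2' : (0:ℝ) < 1 - x := by linarith
  have hr : (0:ℝ) < (1 + x) / (1 - x) := div_pos h1' h2'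
  have hnum : HasDerivAt (fun y : ℝ => 1 + y) 1 x := by
    simpa using (hasDerivAt_id x).const_add (1:ℝ)
  have hden' : HasDerivAt (fun y : ℝ => 1 - y) (-1) x := by
    simpa using (hasDerivAt_id x).const_sub (1:ℝ)
  have hin := hnum.div hden' h2'.ne'
  have hlog := hin.log hr.ne'
  have := hlog.div_const 2
  have heq : (1 * (1 - x) - (1 + x) * -1) / (1 - x) ^ 2 / ((1 + x) / (1 - x)) / 2
      = 1 / (1 - x^2) := by
    have hx2 : (1:ℝ) - x^2 ≠ 0 := by nlinarith
    field_simp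
    ring
  simp only [Pi.div_apply] at this
  rw [heq] at this
  exact this

lemma one_div_cosh_sq (A : ℝ) : 1 / Real.cosh A ^ 2 = 1 - Real.tanh A ^ 2 := by
  have h := Real.cosh_sq_sub_sinh_sq A
  have hc := Real.cosh_pos A
  rw [Real.tanh_eq_sinh_div_cosh]
  field_simp
  linarith [h]

lemma chain_main (c : ℝ → ℂ) (hd1 : ∀ t, DifferentiableAt ℝ c t)
    (hd2 : ∀ t, DifferentiableAt ℝ (deriv c) t) (ct : ℝ → ℂ)
    (hct : ct = fun u => (((1 - u ^ 2 : ℝ) ^ (-(1 / 4) : ℝ) : ℝ) : ℂ) * c (artanh u / 2))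
    (u : ℝ) (hu1 : -1 < u) (hu2 : u < 1) :
    deriv ct u = (u:ℂ)/2 * (((1 - u ^ 2 : ℝ) ^ (-(1 / 4) : ℝ) : ℝ) : ℂ) * (1 - (u:ℂ)^2)⁻¹ *
        c (artanh u / 2)
      + (((1 - u ^ 2 : ℝ) ^ (-(1 / 4) : ℝ) : ℝ) : ℂ) * deriv c (artanh u / 2) *
        (1 - (u:ℂ)^2)⁻¹ / 2 ∧
    deriv (deriv ct) u =
      ((((1 - u ^ 2 : ℝ) ^ (-(1 / 4) : ℝ) : ℝ) : ℂ) * (1 - (u:ℂ)^2)⁻¹ / 2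
          + 5*(u:ℂ)^2 * (((1 - u ^ 2 : ℝ) ^ (-(1 / 4) : ℝ) : ℝ) : ℂ) * ((1 - (u:ℂ)^2)⁻¹)^2 / 4) *
        c (artanh u / 2)
      + 3*(u:ℂ) * (((1 - u ^ 2 : ℝ) ^ (-(1 / 4) : ℝ) : ℝ) : ℂ) * deriv c (artanh u / 2) *
        ((1 - (u:ℂ)^2)⁻¹)^2 / 2
      + (((1 - u ^ 2 : ℝ) ^ (-(1 / 4) : ℝ) : ℝ) : ℂ) * deriv (deriv c) (artanh u / 2) *
        ((1 - (u:ℂ)^2)⁻¹)^2 / 4 := by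
  set W : ℝ → ℝ := fun x => (1 - x ^ 2 : ℝ) ^ (-(1 / 4) : ℝ) with hW
  set τ : ℝ → ℝ := fun x => artanh x / 2 with hτ
  have hWd : ∀ x ∈ Set.Ioo (-1:ℝ) 1, HasDerivAt W (x/2 * W x / (1 - x^2)) x := by
    rintro x ⟨hx1, hx2⟩
    have hv : (0:ℝ) < 1 - x^2 := by nlinarith
    have hin : HasDerivAt (fun y : ℝ => 1 - y^2) (-(2*x)) x := by
      simpa using ((hasDerivAt_pow 2 x).const_sub 1)
    have hout := (Real.hasDerivAt_rpow_const (x := 1 - x^2) (p := -(1/4)) (Or.inl hv.ne')).comp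
      x hin
    have : -(1/4 : ℝ) * (1 - x^2) ^ (-(1/4) - 1 : ℝ) * -(2*x) = x/2 * W x / (1 - x^2) := by
      rw [show (-(1/4) - 1 : ℝ) = -(1/4) + (-1) by ring, Real.rpow_add hv, Real.rpow_neg_one]
      field_simp [hW]
      ring
    rw [this] at hout
    exact hout
  have hτd : ∀ x ∈ Set.Ioo (-1:ℝ) 1, HasDerivAt τ (1/(2*(1 - x^2))) x := by
    rintro x ⟨hx1, hx2⟩
    have := (hasDerivAt_artanh hx1 hx2).div_const 2
    refine this.congr_deriv ?_
    rw [div_div, mul_comm]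
  have hcτ : ∀ x ∈ Set.Ioo (-1:ℝ) 1,
      HasDerivAt (fun y => c (τ y)) ((1/(2*(1 - x^2)) : ℝ) • deriv c (τ x)) x := by
    intro x hx
    exact HasDerivAt.scomp x (hd1 (τ x)).hasDerivAt (hτd x hx)
  have hc'τ : ∀ x ∈ Set.Ioo (-1:ℝ) 1,
      HasDerivAt (fun y => deriv c (τ y)) ((1/(2*(1 - x^2)) : ℝ) • deriv (deriv c) (τ x)) x := by
    intro x hx
    exact HasDerivAt.scomp x (hd2 (τ x)).hasDerivAt (hτd x hx)
  have hvne : ∀ x : ℝ, x ∈ Set.Ioo (-1:ℝ) 1 → ((1:ℂ) - (x:ℂ)^2) ≠ 0 := by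
    rintro x ⟨hx1, hx2⟩
    have hv : (0:ℝ) < 1 - x^2 := by nlinarith
    rw [show (1:ℂ) - (x:ℂ)^2 = ((1 - x^2 : ℝ) : ℂ) by push_cast; ring]
    exact_mod_cast hv.ne'
  have hcast : ∀ x : ℝ, ((x/2 * W x / (1 - x^2) : ℝ) : ℂ)
      = (x:ℂ)/2 * ((W x : ℝ) : ℂ) * (1 - (x:ℂ)^2)⁻¹ := by
    intro x; push_cast; ring
  have hcast2 : ∀ x : ℝ, ((1/(2*(1 - x^2)) : ℝ) : ℂ) = (1 - (x:ℂ)^2)⁻¹ / 2 := by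
    intro x
    push_cast
    rw [one_div, mul_inv]
    ring
  set D1 : ℝ → ℂ := fun x =>
    (x:ℂ)/2 * (W x : ℂ) * (1 - (x:ℂ)^2)⁻¹ * c (τ x)
      + (W x : ℂ) * deriv c (τ x) * (1 - (x:ℂ)^2)⁻¹ / 2 with hD1def
  have hctd : ∀ x ∈ Set.Ioo (-1:ℝ) 1, HasDerivAt ct (D1 x) x := by
    rintro x hx
    have h := ((hWd x hx).ofReal_comp.mul (hcτ x hx))
    rw [hct]
    refine h.congr_deriv ?_
    rw [hD1def]
    simp only [Complex.real_smul]
    rw [hcast x, hcast2 x]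
    ring
  have hu : u ∈ Set.Ioo (-1:ℝ) 1 := ⟨hu1, hu2⟩
  refine ⟨(hctd u hu).deriv, ?_⟩
  have heq : deriv ct =ᶠ[nhds u] D1 := by
    filter_upwards [isOpen_Ioo.mem_nhds hu] with x hx using (hctd x hx).deriv
  rw [heq.deriv_eq]
  have hx1 : HasDerivAt (fun x : ℝ => (x:ℂ)) (((1:ℝ)):ℂ) u := (hasDerivAt_id u).ofReal_comp
  have hWC := (hWd u hu).ofReal_comp
  have hVC : HasDerivAt (fun x : ℝ => 1 - (x:ℂ)^2) ((-(2*u) : ℝ) : ℂ) u := by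
    have hr : HasDerivAt (fun y : ℝ => 1 - y^2) (-(2*u)) u := by
      simpa using (hasDerivAt_pow 2 u).const_sub (1:ℝ)
    have h2 := hr.ofReal_comp
    have hfe : (fun x : ℝ => 1 - (x:ℂ)^2) = fun x : ℝ => ((1 - x^2 : ℝ) : ℂ) := by
      funext x; push_cast; ring
    rw [hfe]
    exact h2
  set P : ℂ := ((W u : ℝ) : ℂ) with hP
  set U : ℂ := ((u : ℝ) : ℂ) with hU
  set J : ℂ := (1 - U^2)⁻¹ with hJ
  have hVinv : HasDerivAt (fun y : ℝ => (1 - (y:ℂ)^2)⁻¹) (2*U*J^2) u := by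
    have h := hVC.inv (hvne u hu)
    refine h.congr_deriv ?_
    rw [hJ, inv_pow]
    push_cast
    ring
  have hA : HasDerivAt (fun y : ℝ => (y:ℂ)/2 * (W y : ℂ) * (1 - (y:ℂ)^2)⁻¹)
      (P * J / 2 + 5*U^2 * P * J^2 / 4) u := by
    have h := ((hx1.div_const 2).mul hWC).mul hVinv
    refine h.congr_deriv ?_
    rw [hcast u]
    push_cast [Pi.mul_apply]
    ring
  have hB : HasDerivAt (fun y : ℝ => (W y : ℂ) * deriv c (τ y) * (1 - (y:ℂ)^2)⁻¹ / 2)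
      (5*U * P * deriv c (τ u) * J^2 / 4 + P * deriv (deriv c) (τ u) * J^2 / 4) u := by
    have h := ((hWC.mul (hc'τ u hu)).mul hVinv).div_const 2
    refine h.congr_deriv ?_
    rw [hcast u]
    simp only [Complex.real_smul, Pi.mul_apply]
    rw [hcast2 u]
    push_cast
    ring
  have hD := (hA.mul (hcτ u hu)).add hB
  rw [(show HasDerivAt D1 _ u from hD).deriv]
  simp only [Complex.real_smul]
  rw [hcast2 u]
  push_cast
  ring

/-- Let `f` be a smooth eigenfunction of `Δ` with eigenvalue `λ = s(1-s)`, periodic under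
`z ↦ e^{b₀} z`, and let `c_n(t) = (1/b₀)∫₀^{b₀} f(a_b ρ_t · i) e(-nb/b₀) db`.  The ODE
`c_n'' + 2 tanh(2t) c_n' - 4(2πn/b₀)²/cosh(2t)² · c_n + 4λ c_n = 0` (which `c_n` satisfies)
is transformed by `u = tanh(2t)`, `c̃_n(u) = cosh(2t)^{1/2} c_n(t)` into the Legendre
differential equation `(1-u²)φ'' - 2uφ' + (ν(ν+1) - μ²/(1-u²))φ = 0` on `(-1,1)` with
parameters `μ = s - 1/2` and `ν = -1/2 + 2πni/b₀` (the equation depends on the signs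
`μ = ±(s-1/2)`, `ν = -1/2 ± 2πni/b₀` only through `μ²` and `ν(ν+1)`). -/
theorem stmt18 (s : ℂ) (b₀ : ℝ) (hb₀ : 0 < b₀) (n : ℤ) (f : ℝ → ℝ → ℂ)
    (hf : ContDiff ℝ (⊤ : ℕ∞) (fun p : ℝ × ℝ => f p.1 p.2))
    (heig : ∀ x y : ℝ, 0 < y → hypLap f x y = s * (1 - s) * f x y)
    (hper : ∀ x y : ℝ, f (Real.exp b₀ * x) (Real.exp b₀ * y) = f x y)
    (c : ℝ → ℂ)
    (hc : c = fun t => (b₀ : ℂ)⁻¹ *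
      ∫ b in (0 : ℝ)..b₀,
        f (ptFJ b t).re (ptFJ b t).im *
          Complex.exp (-2 * Real.pi * Complex.I * (n : ℂ) * (b : ℂ) / (b₀ : ℂ)))
    (hODE : ∀ t : ℝ,
      deriv (deriv c) t + ((2 * Real.tanh (2 * t) : ℝ) : ℂ) * deriv c t
        - ((4 * (2 * Real.pi * (n : ℝ) / b₀) ^ 2 / Real.cosh (2 * t) ^ 2 : ℝ) : ℂ) * c t
        + 4 * (s * (1 - s)) * c t = 0)
    (ct : ℝ → ℂ)
    (hct : ct = fun u => (((1 - u ^ 2 : ℝ) ^ (-(1 / 4) : ℝ) : ℝ) : ℂ) * c (artanh u / 2)) :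
    ∀ u ∈ Set.Ioo (-1 : ℝ) 1,
      (1 - (u : ℂ) ^ 2) * deriv (deriv ct) u - 2 * (u : ℂ) * deriv ct u +
        (((-(1 / 2 : ℂ) + 2 * Real.pi * (n : ℂ) * Complex.I / (b₀ : ℂ)) *
            ((-(1 / 2 : ℂ) + 2 * Real.pi * (n : ℂ) * Complex.I / (b₀ : ℂ)) + 1)) -
          (s - 1 / 2) ^ 2 / (1 - (u : ℂ) ^ 2)) * ct u = 0 := by
  set G : ℝ × ℝ → ℂ := fun p =>
    f (ptFJ p.2 p.1).re (ptFJ p.2 p.1).im *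
      Complex.exp (-2 * Real.pi * Complex.I * (n : ℂ) * (p.2 : ℂ) / (b₀ : ℂ)) with hG
  have hGsm : ContDiff ℝ (⊤ : ℕ∞) G := by
    have hGeq : G = fun p : ℝ × ℝ =>
        f (Real.exp p.2 * Real.tanh (2*p.1)) (Real.exp p.2 / Real.cosh (2*p.1)) *
          Complex.exp (-2 * Real.pi * Complex.I * (n : ℂ) * (p.2 : ℂ) / (b₀ : ℂ)) := by
      funext p
      simp only [hG, ptFJ_re, ptFJ_im]
    rw [hGeq]
    have htanh : ContDiff ℝ (⊤ : ℕ∞) Real.tanh := by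
      have : Real.tanh = fun x => Real.sinh x / Real.cosh x := funext Real.tanh_eq_sinh_div_cosh
      rw [this]
      exact Real.contDiff_sinh.div Real.contDiff_cosh fun x => (Real.cosh_pos x).ne'
    have h2fst : ContDiff ℝ (⊤ : ℕ∞) (fun p : ℝ × ℝ => 2*p.1) := contDiff_const.mul contDiff_fst
    have hφ1 : ContDiff ℝ (⊤ : ℕ∞) (fun p : ℝ × ℝ => Real.exp p.2 * Real.tanh (2*p.1)) :=
      (Real.contDiff_exp.comp contDiff_snd).mul (htanh.comp h2fst)
    have hφ2 : ContDiff ℝ (⊤ : ℕ∞) (fun p : ℝ × ℝ => Real.exp p.2 / Real.cosh (2*p.1)) :=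
      (Real.contDiff_exp.comp contDiff_snd).div (Real.contDiff_cosh.comp h2fst)
        (fun p => (Real.cosh_pos _).ne')
    have hfc : ContDiff ℝ (⊤ : ℕ∞) (fun p : ℝ × ℝ =>
        f (Real.exp p.2 * Real.tanh (2*p.1)) (Real.exp p.2 / Real.cosh (2*p.1))) :=
      hf.comp (hφ1.prodMk hφ2)
    have hec : ContDiff ℝ (⊤ : ℕ∞) (fun p : ℝ × ℝ =>
        Complex.exp (-2 * Real.pi * Complex.I * (n : ℂ) * (p.2 : ℂ) / (b₀ : ℂ))) := by
      have hinner : ContDiff ℝ (⊤ : ℕ∞) (fun p : ℝ × ℝ =>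
          -2 * (Real.pi : ℂ) * Complex.I * (n : ℂ) * (p.2 : ℂ) / (b₀ : ℂ)) :=
        (contDiff_const.mul (Complex.ofRealCLM.contDiff.comp contDiff_snd)).div_const _
      exact Complex.contDiff_exp.comp hinner
    exact hfc.mul hec
  have hc1 : ∀ t, HasDerivAt c ((b₀:ℂ)⁻¹ * ∫ x in (0:ℝ)..b₀, fderiv ℝ G (t, x) (1, 0)) t := by
    intro t
    rw [hc]
    exact (hasDerivAt_parametric G hGsm 0 b₀ t).const_mul _
  have hd1 : ∀ t, DifferentiableAt ℝ c t := fun t => (hc1 t).differentiableAt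
  have hdc : deriv c = fun t => (b₀:ℂ)⁻¹ * ∫ x in (0:ℝ)..b₀, fderiv ℝ G (t, x) (1, 0) :=
    funext fun t => (hc1 t).deriv
  have hd2 : ∀ t, DifferentiableAt ℝ (deriv c) t := by
    intro t
    rw [hdc]
    exact ((hasDerivAt_parametric _ (contDiff_Gd G hGsm) 0 b₀ t).const_mul _).differentiableAt
  intro u hu
  obtain ⟨hu1, hu2⟩ := hu
  obtain ⟨hder1, hder2⟩ := chain_main c hd1 hd2 ct hct u hu1 hu2
  have hv : (0:ℝ) < 1 - u^2 := by nlinarith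
  have hvC : (1:ℂ) - (u:ℂ)^2 ≠ 0 := by
    rw [show (1:ℂ) - (u:ℂ)^2 = ((1-u^2:ℝ):ℂ) by push_cast; ring]
    exact_mod_cast hv.ne'
  have hVV : ((1:ℂ) - (u:ℂ)^2) * ((1:ℂ) - (u:ℂ)^2)⁻¹ = 1 := mul_inv_cancel₀ hvC
  have h := hODE (artanh u / 2)
  rw [show (2:ℝ) * (artanh u / 2) = artanh u by ring] at h
  rw [tanh_artanh hu1 hu2] at h
  have hco : Real.cosh (artanh u) ^ 2 = 1 / (1 - u^2) := by
    have h1 : 1 / Real.cosh (artanh u)^2 = 1 - u^2 := by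
      rw [one_div_cosh_sq, tanh_artanh hu1 hu2]
    have hcp : (0:ℝ) < Real.cosh (artanh u) := Real.cosh_pos _
    rw [div_eq_iff (pow_ne_zero 2 hcp.ne')] at h1
    rw [eq_div_iff hv.ne']
    linear_combination -h1
  rw [hco, div_div_eq_mul_div, div_one] at h
  push_cast at h
  have hctu : ct u = (((1 - u ^ 2 : ℝ) ^ (-(1 / 4) : ℝ) : ℝ) : ℂ) * c (artanh u / 2) := by
    rw [hct]
  rw [hder2, hder1, hctu]
  linear_combination
    ((((1 - u ^ 2 : ℝ) ^ (-(1 / 4) : ℝ) : ℝ) : ℂ) * (1 - (u:ℂ)^2)⁻¹ / 4) * h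
    + ((((1 - u ^ 2 : ℝ) ^ (-(1 / 4) : ℝ) : ℝ) : ℂ) * deriv (deriv c) (artanh u / 2) *
          (1 - (u:ℂ)^2)⁻¹ / 4
        + 3*(u:ℂ) * (((1 - u ^ 2 : ℝ) ^ (-(1 / 4) : ℝ) : ℝ) : ℂ) * deriv c (artanh u / 2) *
          (1 - (u:ℂ)^2)⁻¹ / 2
        + (((1 - u ^ 2 : ℝ) ^ (-(1 / 4) : ℝ) : ℝ) : ℂ) * c (artanh u / 2) / 4
        + 5*(u:ℂ)^2 * (((1 - u ^ 2 : ℝ) ^ (-(1 / 4) : ℝ) : ℝ) : ℂ) * c (artanh u / 2) *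
          (1 - (u:ℂ)^2)⁻¹ / 4
        + (2*(Real.pi:ℂ)*(n:ℂ)/(b₀:ℂ))^2 * (((1 - u ^ 2 : ℝ) ^ (-(1 / 4) : ℝ) : ℝ) : ℂ) *
          c (artanh u / 2)) * hVV
    + ((2*(Real.pi:ℂ)*(n:ℂ)/(b₀:ℂ))^2 * (((1 - u ^ 2 : ℝ) ^ (-(1 / 4) : ℝ) : ℝ) : ℂ) *
        c (artanh u / 2)) * Complex.I_sq
end
end
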